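/- arXiv:1105.2672 — 7 statements merged into one kernel-verified Lean document; each statement's English description precedes it below -/
import Mathlib

section
/- Let $n_1 > n_2 \geq 3$ be integers, and let $\mathcal{H}_{n_1,n_2}$ be the 3-uniform bi-hypergraph on $X = [n_1] \times [n_2]$ whose edges are all 3-subsets $\{x,y,z\}$ with $|\{x_1,y_1,z_1\}| = 2$ and $|\{x_2,y_2,z_2\}| = 2$. Suppose $c$ is a proper coloring of $\mathcal{H}_{n_1,n_2}$ in which $(1,1)$ and $(1,2)$ receive the same color. Then $c$ is (as a partition) equal to the coloring by first coordinate: two vertices receive the same color if and only if they agree in the first coordinate. -/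
/-- Edge set of the 3-uniform bi-hypergraph `H_{n₁,n₂}` on `[n₁] × [n₂]`:
3-subsets taking exactly 2 distinct values in both coordinates. -/
def E2 (n1 n2 : ℕ) : Set (Finset (Fin n1 × Fin n2)) :=
  {b | b.card = 3 ∧ (b.image Prod.fst).card = 2 ∧ (b.image Prod.snd).card = 2}

/-- A proper coloring: every edge has two vertices with a common color and
two vertices with distinct colors. -/
def ProperColoring {X α : Type*} (E : Set (Finset X)) (c : X → α) : Prop :=
  ∀ b ∈ E, (∃ x ∈ b, ∃ y ∈ b, x ≠ y ∧ c x = c y) ∧ (∃ x ∈ b, ∃ y ∈ b, c x ≠ c y)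

/-!
Any three corners of a rectangle `{a, b} × {p, q}` form an edge, so its four corners carry exactly
two colors, splitting them into two equally colored pairs. Since `c (0,0) = c (0,1)`, in every
rectangle `{0, b} × {0, 1}` the pairs are the rows; hence each row has equal colors in columns `0`
and `1`, which in turn makes the rows `{a, b}` split by rows and so column `0` injectively colored.
Finally, if `c (a, q) ≠ c (a, 0)`, the rectangles `{a, b} × {0, q}` must pair diagonally, forcing
`c (b, 0) = c (a, q)` for every `b ≠ a`; with at least two such rows this contradicts injectivity.
-/

def TakesTwoValues {α : Type*} (u v w : α) : Prop :=
  (u = v ∨ u = w ∨ v = w) ∧ ¬(u = v ∧ u = w)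

theorem takesTwoValues_quadruple {α : Type*} {u v w z : α}
    (huvw : TakesTwoValues u v w) (huvz : TakesTwoValues u v z)
    (huwz : TakesTwoValues u w z) (hvwz : TakesTwoValues v w z) :
    (u = v ∧ w = z ∧ u ≠ w) ∨ (u = w ∧ v = z ∧ u ≠ v) ∨ (u = z ∧ v = w ∧ u ≠ v) := by
  unfold TakesTwoValues at *
  by_cases u = v <;> by_cases u = w <;> by_cases u = z <;>
    by_cases v = w <;> by_cases v = z <;> by_cases w = z <;> simp_all

theorem ProperColoring.takesTwoValues {X α : Type*} [DecidableEq X] {E : Set (Finset X)}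
    {c : X → α} (hc : ProperColoring E c) {x y z : X} (hxyz : {x, y, z} ∈ E) :
    TakesTwoValues (c x) (c y) (c z) := by
  obtain ⟨⟨s, hs, t, ht, hst, hcst⟩, ⟨s', hs', t', ht', hne⟩⟩ := hc _ hxyz
  simp only [Finset.mem_insert, Finset.mem_singleton] at hs ht hs' ht'
  constructor
  · rcases hs with rfl | rfl | rfl <;> rcases ht with rfl | rfl | rfl <;> grind
  · rintro ⟨hxy, hxz⟩
    rcases hs' with rfl | rfl | rfl <;> rcases ht' with rfl | rfl | rfl <;> grind

section Rectangle

variable {n1 n2 : ℕ} {a b : Fin n1} {p q : Fin n2}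

theorem rectangle_triple_mem_E2 (hab : a ≠ b) (hpq : p ≠ q) :
    ({(a, p), (a, q), (b, p)} : Finset _) ∈ E2 n1 n2 ∧
    ({(a, p), (a, q), (b, q)} : Finset _) ∈ E2 n1 n2 ∧
    ({(a, p), (b, p), (b, q)} : Finset _) ∈ E2 n1 n2 ∧
    ({(a, q), (b, p), (b, q)} : Finset _) ∈ E2 n1 n2 := by
  simp [E2, Finset.card_insert_of_notMem, hab, hpq, hpq.symm]

variable {α : Type*} {c : Fin n1 × Fin n2 → α}

theorem ProperColoring.rectangle (hc : ProperColoring (E2 n1 n2) c) (hab : a ≠ b) (hpq : p ≠ q) :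
    (c (a, p) = c (a, q) ∧ c (b, p) = c (b, q) ∧ c (a, p) ≠ c (b, p)) ∨
    (c (a, p) = c (b, p) ∧ c (a, q) = c (b, q) ∧ c (a, p) ≠ c (a, q)) ∨
    (c (a, p) = c (b, q) ∧ c (a, q) = c (b, p) ∧ c (a, p) ≠ c (a, q)) := by
  obtain ⟨h₁, h₂, h₃, h₄⟩ := rectangle_triple_mem_E2 hab hpq
  exact takesTwoValues_quadruple (hc.takesTwoValues h₁) (hc.takesTwoValues h₂)
    (hc.takesTwoValues h₃) (hc.takesTwoValues h₄)

theorem ProperColoring.rectangle_of_row_eq (hc : ProperColoring (E2 n1 n2) c) (hab : a ≠ b)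
    (hpq : p ≠ q) (hrow : c (a, p) = c (a, q)) :
    c (b, p) = c (b, q) ∧ c (a, p) ≠ c (b, p) := by
  rcases hc.rectangle hab hpq with ⟨-, h, hne⟩ | ⟨-, -, hne⟩ | ⟨-, -, hne⟩
  · exact ⟨h, hne⟩
  all_goals exact absurd hrow hne

theorem ProperColoring.eq_of_injective_column (hc : ProperColoring (E2 n1 n2) c) (hn : 2 < n1)
    (hinj : Function.Injective fun b => c (b, p)) (a : Fin n1) (q : Fin n2) :
    c (a, q) = c (a, p) := by
  by_contra hne
  have hpq : p ≠ q := by rintro rfl; exact hne rfl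
  have hother : ∀ b ∈ Finset.univ.erase a, c (b, p) = c (a, q) := by
    intro b hb
    have hab : a ≠ b := (Finset.ne_of_mem_erase hb).symm
    rcases hc.rectangle hab hpq with ⟨h, -⟩ | ⟨h, -⟩ | ⟨-, h, -⟩
    · exact absurd h.symm hne
    · exact absurd (hinj h) hab
    · exact h.symm
  have hcard : 1 < (Finset.univ.erase a).card := by
    rw [Finset.card_erase_of_mem (Finset.mem_univ a), Finset.card_univ, Fintype.card_fin]
    omega
  obtain ⟨b₁, b₂, hb₁, hb₂, hb⟩ := Finset.one_lt_card_iff.mp hcard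
  exact hb (hinj ((hother b₁ hb₁).trans (hother b₂ hb₂).symm))

end Rectangle

/-- if a proper coloring of `H_{n₁,n₂}` (with `n₁ > n₂ ≥ 3`) gives
`(1,1)` and `(1,2)` the same color, then it is the partition by the first
coordinate. -/
theorem stmt2 (n1 n2 : ℕ) (h12 : n2 < n1) (h2 : 3 ≤ n2) {α : Type*}
    (c : Fin n1 × Fin n2 → α) (hc : ProperColoring (E2 n1 n2) c)
    (hsame : c (⟨0, by omega⟩, ⟨0, by omega⟩) = c (⟨0, by omega⟩, ⟨1, by omega⟩)) :
    ∀ x y : Fin n1 × Fin n2, c x = c y ↔ x.1 = y.1 := by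
  set p₀ : Fin n2 := ⟨0, by omega⟩
  set p₁ : Fin n2 := ⟨1, by omega⟩
  have hp : p₀ ≠ p₁ := by simp [p₀, p₁, Fin.ext_iff]
  have hrow : ∀ a, c (a, p₀) = c (a, p₁) := by
    intro a
    rcases eq_or_ne ⟨0, by omega⟩ a with rfl | ha
    · exact hsame
    · exact (hc.rectangle_of_row_eq ha hp hsame).1
  have hinj : Function.Injective fun a => c (a, p₀) := fun a b h =>
    not_not.mp fun hab => (hc.rectangle_of_row_eq hab hp (hrow a)).2 h
  have hcol := hc.eq_of_injective_column (by omega) hinj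
  rintro ⟨a, q⟩ ⟨b, r⟩
  rw [hcol a q, hcol b r]
  exact hinj.eq_iff
end

section
/- Let $n_1 > n_2 \geq 3$ be integers, and let $\mathcal{H}_{n_1,n_2}$ be the 3-uniform bi-hypergraph on $X = [n_1] \times [n_2]$ whose edges are all 3-subsets $\{x,y,z\}$ with $|\{x_1,y_1,z_1\}| = 2$ and $|\{x_2,y_2,z_2\}| = 2$. Then $\mathcal{H}_{n_1,n_2}$ has exactly two feasible partitions: the partition by first coordinate (into $n_1$ classes) and the partition by second coordinate (into $n_2$ classes). In particular, its feasible set is $\{n_1, n_2\}$ and $r_{n_1} = r_{n_2} = 1$. -/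
/-- A partition (setoid) is a feasible partition (proper coloring) of a
bi-hypergraph: every edge has two vertices in a common class and two in
distinct classes. -/
def ProperSetoid {X : Type*} (E : Set (Finset X)) (P : Setoid X) : Prop :=
  ∀ b ∈ E, (∃ x ∈ b, ∃ y ∈ b, x ≠ y ∧ P x y) ∧ (∃ x ∈ b, ∃ y ∈ b, ¬ P x y)

/-! The heart of the argument is that no class contains two points differing in both coordinates.
If `(a, c) ~ (b, d)`, the corners inside the square `{a, b} × {c, d}` force it to split into its
two diagonals. Within the rows `a, b` a third column `f` must then copy column `c` or `d`, within the
columns `c, d` a third row `g` must copy row `a` or `b`, and the corner where the copied row and the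
copied column meet lies in a single class. Once diagonals are excluded, the apex of every corner is
related to exactly one of its two arms, and one related pair in a column spreads to all columns:
so either every column or every row is a class. -/

variable {α β : Type*}

theorem Setoid.rel_or_rel_or_rel_of_mem_triple {X : Type*} [DecidableEq X] (P : Setoid X)
    {x y z u v : X} (hu : u ∈ ({x, y, z} : Finset X)) (hv : v ∈ ({x, y, z} : Finset X))
    (huv : u ≠ v) (h : P u v) : P x y ∨ P x z ∨ P y z := by
  simp only [Finset.mem_insert, Finset.mem_singleton] at hu hv
  rcases hu with rfl | rfl | rfl <;> rcases hv with rfl | rfl | rfl <;>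
    first | exact absurd rfl huv | simp only [h, P.symm h, true_or, or_true]

theorem Setoid.rel_of_mem_triple {X : Type*} [DecidableEq X] (P : Setoid X) {x y z u v : X}
    (hy : P x y) (hz : P x z) (hu : u ∈ ({x, y, z} : Finset X))
    (hv : v ∈ ({x, y, z} : Finset X)) : P u v := by
  have hx : ∀ w ∈ ({x, y, z} : Finset X), P x w := by
    simp only [Finset.mem_insert, Finset.mem_singleton, forall_eq_or_imp, forall_eq]
    exact ⟨P.refl x, hy, hz⟩
  exact P.trans (P.symm (hx u hu)) (hx v hv)

theorem Setoid.ker_fst_ne_ker_snd [Nonempty α] [Nontrivial β] :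
    Setoid.ker (Prod.fst : α × β → α) ≠ Setoid.ker Prod.snd := by
  obtain ⟨c, d, hcd⟩ := exists_pair_ne β
  intro h
  exact hcd ((Setoid.ext_iff.1 h (Classical.arbitrary α, c) (Classical.arbitrary α, d)).1 rfl)

theorem Setoid.eq_ker_fst_of_comap_swap {P : Setoid (α × β)}
    (h : P.comap Prod.swap = Setoid.ker Prod.snd) : P = Setoid.ker Prod.fst := by
  ext ⟨a, c⟩ ⟨b, d⟩
  simpa [Setoid.comap_rel, Setoid.ker_def] using Setoid.ext_iff.1 h (c, a) (d, b)

theorem properSetoid_ker {X Y : Type*} [DecidableEq Y] {E : Set (Finset X)} (f : X → Y)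
    (h : ∀ b ∈ E, (b.image f).card < b.card ∧ 1 < (b.image f).card) :
    ProperSetoid E (Setoid.ker f) := by
  intro b hb
  obtain ⟨hlt, hone⟩ := h b hb
  obtain ⟨x, hx, y, hy, hxy, hfxy⟩ :=
    Finset.exists_ne_map_eq_of_card_lt_of_maps_to hlt fun x hx => Finset.mem_image_of_mem f hx
  obtain ⟨u, hu, v, hv, huv⟩ := Finset.one_lt_card.mp hone
  obtain ⟨x', hx', rfl⟩ := Finset.mem_image.mp hu
  obtain ⟨y', hy', rfl⟩ := Finset.mem_image.mp hv
  exact ⟨⟨x, hx, y, hy, hxy, hfxy⟩, x', hx', y', hy', huv⟩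

/-- `P` splits every corner `{(a, c), (a, d), (b, c)}` (apex `(a, c)`, `a ≠ b`, `c ≠ d`) of the
grid `α × β` into exactly two classes; the edges of `H_{n₁,n₂}` are exactly these corners. -/
def SplitsCorners (P : Setoid (α × β)) : Prop :=
  ∀ ⦃a b : α⦄ ⦃c d : β⦄, a ≠ b → c ≠ d →
    (P (a, c) (a, d) ∨ P (a, c) (b, c) ∨ P (a, d) (b, c)) ∧
      ¬(P (a, c) (a, d) ∧ P (a, c) (b, c))

namespace SplitsCorners

variable {P : Setoid (α × β)} {a b : α} {c d f : β}

theorem not_rel_col_of_rel_row (hP : SplitsCorners P) (hab : a ≠ b) (hcd : c ≠ d)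
    (h : P (a, c) (a, d)) : ¬P (a, c) (b, c) :=
  fun h' => (hP hab hcd).2 ⟨h, h'⟩

theorem swap (hP : SplitsCorners P) : SplitsCorners (P.comap Prod.swap) := by
  intro c d a b hcd hab
  simp only [Setoid.comap_rel, Prod.swap_prod_mk]
  obtain ⟨hsome, hnot⟩ := hP hab hcd
  refine ⟨?_, fun ⟨h1, h2⟩ => hnot ⟨h2, h1⟩⟩
  rcases hsome with h | h | h
  · exact Or.inr (Or.inl h)
  · exact Or.inl h
  · exact Or.inr (Or.inr (P.symm h))

theorem rel_rows_or_rel_diagonals (hP : SplitsCorners P) (hab : a ≠ b) (hcf : c ≠ f)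
    (h : ¬P (a, c) (b, c)) :
    (P (a, c) (a, f) ∧ P (b, c) (b, f)) ∨ (P (a, f) (b, c) ∧ P (a, c) (b, f)) := by
  rcases (hP hab hcf).1 with hrow | hcol | hdiag
  · refine Or.inl ⟨hrow, ?_⟩
    rcases (hP hab.symm hcf).1 with h' | h' | h'
    · exact h'
    · exact absurd (P.symm h') h
    · exact absurd (P.trans (P.symm hrow) (P.symm h'))
        (hP.not_rel_col_of_rel_row hab hcf.symm (P.symm hrow))
  · exact absurd hcol h
  · refine Or.inr ⟨hdiag, ?_⟩
    rcases (hP hab.symm hcf).1 with h' | h' | h'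
    · exact absurd (P.trans (P.symm h') (P.symm hdiag))
        (hP.not_rel_col_of_rel_row hab.symm hcf.symm (P.symm h'))
    · exact absurd (P.symm h') h
    · exact P.symm h'

theorem exists_col_copied_of_rel_diag (hP : SplitsCorners P) (hab : a ≠ b) (hcd : c ≠ d)
    (hfc : f ≠ c) (h : P (a, c) (b, d)) :
    ∃ y ∈ ({c, d} : Set β), ∀ x ∈ ({a, b} : Set α), P (x, y) (x, f) := by
  have hcol : ¬P (a, c) (b, c) := fun h' =>
    hP.not_rel_col_of_rel_row hab.symm hcd (P.trans (P.symm h') h) (P.symm h')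
  have hrow : ¬P (a, c) (a, d) := fun h' =>
    hP.not_rel_col_of_rel_row hab hcd.symm (P.symm h') (P.trans (P.symm h') h)
  have hanti : P (a, d) (b, c) := by
    rcases (hP hab hcd).1 with h' | h' | h'
    exacts [absurd h' hrow, absurd h' hcol, h']
  simp only [Set.mem_insert_iff, Set.mem_singleton_iff, exists_eq_or_imp, exists_eq_left,
    forall_eq_or_imp, forall_eq]
  rcases hP.rel_rows_or_rel_diagonals hab hfc.symm hcol with ⟨hac, hbc⟩ | ⟨haf, hbf⟩
  · exact Or.inl ⟨hac, hbc⟩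
  · exact Or.inr ⟨P.trans hanti (P.symm haf), P.trans (P.symm h) hbf⟩

theorem not_rel_of_ne_of_ne (hP : SplitsCorners P) (hα : 3 ≤ ENat.card α)
    (hβ : 3 ≤ ENat.card β) (hab : a ≠ b) (hcd : c ≠ d) : ¬P (a, c) (b, d) := by
  intro h
  obtain ⟨f, hfc, hfd⟩ := ENat.exists_ne_ne_of_three_le hβ c d
  obtain ⟨g, hga, hgb⟩ := ENat.exists_ne_ne_of_three_le hα a b
  obtain ⟨y, hy, hcol⟩ := hP.exists_col_copied_of_rel_diag hab hcd hfc h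
  obtain ⟨x, hx, hrow⟩ := hP.swap.exists_col_copied_of_rel_diag hcd hab hga h
  have hxg : x ≠ g := by rintro rfl; rcases hx with rfl | rfl <;> simp_all
  have hyf : y ≠ f := by rintro rfl; rcases hy with rfl | rfl <;> simp_all
  exact hP.not_rel_col_of_rel_row hxg hyf (hcol x hx) (hrow y hy)

theorem rel_row_iff_not_rel_col (hP : SplitsCorners P) (hα : 3 ≤ ENat.card α)
    (hβ : 3 ≤ ENat.card β) (hab : a ≠ b) (hcd : c ≠ d) :
    P (a, c) (a, d) ↔ ¬P (a, c) (b, c) := by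
  refine ⟨hP.not_rel_col_of_rel_row hab hcd, fun h => ?_⟩
  rcases (hP hab hcd).1 with h' | h' | h'
  exacts [h', absurd h' h, absurd h' (hP.not_rel_of_ne_of_ne hα hβ hab hcd.symm)]

theorem rel_col_of_rel_col (hP : SplitsCorners P) (hα : 3 ≤ ENat.card α)
    (hβ : 3 ≤ ENat.card β) (hab : a ≠ b) (h : P (a, c) (b, c)) (x x' : α) (d : β) :
    P (x, d) (x', d) := by
  have hd : P (a, d) (b, d) := by
    rcases eq_or_ne c d with rfl | hcd
    · exact h
    have hrow : ¬P (a, c) (a, d) := fun h' => (hP.rel_row_iff_not_rel_col hα hβ hab hcd).1 h' h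
    by_contra hd
    exact hrow (P.symm ((hP.rel_row_iff_not_rel_col hα hβ hab hcd.symm).2 hd))
  obtain ⟨e, hed, -⟩ := ENat.exists_ne_ne_of_three_le hβ d d
  have hcol (z : α) : P (a, d) (z, d) := by
    rcases eq_or_ne a z with rfl | haz
    · exact P.refl _
    by_contra hz
    exact (hP.rel_row_iff_not_rel_col hα hβ hab hed.symm).1
      ((hP.rel_row_iff_not_rel_col hα hβ haz hed.symm).2 hz) hd
  exact P.trans (P.symm (hcol x)) (hcol x')

theorem eq_ker_snd_of_rel_col (hP : SplitsCorners P) (hα : 3 ≤ ENat.card α)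
    (hβ : 3 ≤ ENat.card β) (hab : a ≠ b) (h : P (a, c) (b, c)) : P = Setoid.ker Prod.snd := by
  have hcol := hP.rel_col_of_rel_col hα hβ hab h
  ext ⟨x, y⟩ ⟨x', y'⟩
  rw [Setoid.ker_def]
  refine ⟨fun hxy => ?_, fun (hy : y = y') => hy ▸ hcol x x' y⟩
  by_contra hne
  rcases eq_or_ne x x' with rfl | hxx
  · obtain ⟨z, hzx, -⟩ := ENat.exists_ne_ne_of_three_le hα x x
    exact hP.not_rel_col_of_rel_row hzx.symm hne hxy (hcol x z y)
  · exact hP.not_rel_of_ne_of_ne hα hβ hxx hne hxy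

theorem eq_ker_fst_or_eq_ker_snd (hP : SplitsCorners P) (hα : 3 ≤ ENat.card α)
    (hβ : 3 ≤ ENat.card β) : P = Setoid.ker Prod.fst ∨ P = Setoid.ker Prod.snd := by
  by_cases hcol : ∃ a b c, a ≠ b ∧ P (a, c) (b, c)
  · obtain ⟨a, b, c, hab, h⟩ := hcol
    exact Or.inr (hP.eq_ker_snd_of_rel_col hα hβ hab h)
  push Not at hcol
  have : Nontrivial α := (ENat.one_lt_card_iff_nontrivial α).1 (lt_of_lt_of_le (by norm_num) hα)
  have : Nontrivial β := (ENat.one_lt_card_iff_nontrivial β).1 (lt_of_lt_of_le (by norm_num) hβ)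
  obtain ⟨a, b, hab⟩ := exists_pair_ne α
  obtain ⟨c, d, hcd⟩ := exists_pair_ne β
  have hrow : P (a, c) (a, d) := (hP.rel_row_iff_not_rel_col hα hβ hab hcd).2 (hcol a b c hab)
  exact Or.inl (Setoid.eq_ker_fst_of_comap_swap (hP.swap.eq_ker_snd_of_rel_col hβ hα hcd hrow))

end SplitsCorners

theorem corner_mem_E2 {n1 n2 : ℕ} {a b : Fin n1} {c d : Fin n2} (hab : a ≠ b) (hcd : c ≠ d) :
    {(a, c), (a, d), (b, c)} ∈ E2 n1 n2 := by
  simp [E2, Finset.card_insert_of_notMem, hab, hcd, hcd.symm]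

theorem ProperSetoid.splitsCorners {n1 n2 : ℕ} {P : Setoid (Fin n1 × Fin n2)}
    (hP : ProperSetoid (E2 n1 n2) P) : SplitsCorners P := by
  intro a b c d hab hcd
  obtain ⟨⟨x, hx, y, hy, hxy, hrel⟩, u, hu, v, hv, hnrel⟩ := hP _ (corner_mem_E2 hab hcd)
  exact ⟨P.rel_or_rel_or_rel_of_mem_triple hx hy hxy hrel,
    fun ⟨hd, hb⟩ => hnrel (P.rel_of_mem_triple hd hb hu hv)⟩

/-- for `n₁ > n₂ ≥ 3`, the feasible partitions of `H_{n₁,n₂}` are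
exactly the partition by first coordinate and the partition by second
coordinate; these are distinct and have `n₁` resp. `n₂` classes, so
`Φ = {n₁, n₂}` and `r_{n₁} = r_{n₂} = 1`. -/
theorem stmt3 (n1 n2 : ℕ) (h12 : n2 < n1) (h2 : 3 ≤ n2) :
    {P : Setoid (Fin n1 × Fin n2) | ProperSetoid (E2 n1 n2) P}
      = {Setoid.ker (Prod.fst : Fin n1 × Fin n2 → Fin n1),
         Setoid.ker (Prod.snd : Fin n1 × Fin n2 → Fin n2)} ∧
    Setoid.ker (Prod.fst : Fin n1 × Fin n2 → Fin n1)
      ≠ Setoid.ker (Prod.snd : Fin n1 × Fin n2 → Fin n2) ∧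
    Nat.card (Quotient (Setoid.ker (Prod.fst : Fin n1 × Fin n2 → Fin n1))) = n1 ∧
    Nat.card (Quotient (Setoid.ker (Prod.snd : Fin n1 × Fin n2 → Fin n2))) = n2 := by
  have : Nonempty (Fin n1) := ⟨⟨0, by omega⟩⟩
  have : Nontrivial (Fin n2) := Fin.nontrivial_iff_two_le.2 (by omega)
  have hα : 3 ≤ ENat.card (Fin n1) := by simp; omega
  have hβ : 3 ≤ ENat.card (Fin n2) := by simpa using h2
  refine ⟨?_, Setoid.ker_fst_ne_ker_snd, ?_, ?_⟩
  · ext P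
    refine ⟨fun hP => hP.splitsCorners.eq_ker_fst_or_eq_ker_snd hα hβ, ?_⟩
    rintro (rfl | rfl)
    · exact properSetoid_ker _ fun b ⟨hb, hfst, _⟩ => by omega
    · exact properSetoid_ker _ fun b ⟨hb, _, hsnd⟩ => by omega
  · exact (Nat.card_congr (Setoid.quotientKerEquivOfSurjective _ Prod.fst_surjective)).trans
      (Nat.card_fin n1)
  · exact (Nat.card_congr (Setoid.quotientKerEquivOfSurjective _ Prod.snd_surjective)).trans
      (Nat.card_fin n2)
end

section
/- Let $s \geq 2$ and $n_1 > n_2 > \cdots > n_s \geq 3$ be integers. Let $\mathcal{H}_{n_1,\ldots,n_s}$ be the 3-uniform bi-hypergraph on $X = [n_1] \times \cdots \times [n_s]$ whose edges are all 3-subsets $\{x,y,z\}$ with $|\{x_j,y_j,z_j\}| = 2$ for every $j \in [s]$. Then the feasible partitions of $\mathcal{H}_{n_1,\ldots,n_s}$ are exactly the $s$ partitions by a fixed coordinate: for each $i \in [s]$, the partition into classes $\{x : x_i = j\}$, $j \in [n_i]$. Consequently $\Phi(\mathcal{H}_{n_1,\ldots,n_s}) = \{n_1, \ldots, n_s\}$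 and $r_{n_i} = 1$ for every $i \in [s]$. -/
/-- Edge set of the 3-uniform bi-hypergraph `H_{n₁,…,nₛ}`. -/
def Es {s : ℕ} (n : Fin s → ℕ) : Set (Finset (∀ j, Fin (n j))) :=
  {b | b.card = 3 ∧ ∀ j, (b.image fun x => x j).card = 2}

/-!
A proper colouring is handled as a map `f` with `P = Setoid.ker f`, so that lying in a common
class is an equation. If `u` and `z` differ in every coordinate other than `j` and `a ≠ b`, any
three of the points `update u j a`, `update u j b`, `update z j a`, `update z j b` form an edge,
so `f` pairs these four points off; on a `3 × 3` grid of such points the diagonal pairing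
(`update u j a` with `update z j b`) is impossible. Hence once `f` separates two points that differ
only in coordinate `j`, it is injective on every line in direction `j`, identifies any two points
that agree in coordinate `j` and differ in all others, and therefore identifies all points that
agree in coordinate `j`. Some coordinate separates such a pair, since otherwise `f` is constant,
and then `f` induces the partition by that coordinate.
-/

open Function

theorem ProperSetoid.apply_eq_iff {X Y : Type*} [DecidableEq X] {E : Set (Finset X)}
    {f : X → Y} (hf : ProperSetoid E (Setoid.ker f)) {p q r : X} (he : {p, q, r} ∈ E) :
    f q = f r ↔ f p ≠ f q ∧ f p ≠ f r := by
  obtain ⟨⟨x, hx, y, hy, hxy, hrel⟩, ⟨x', hx', y', hy', hrel'⟩⟩ := hf _ he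
  simp only [Setoid.ker_def, Finset.mem_insert, Finset.mem_singleton] at *
  grind

theorem Function.apply_eq_of_forall_apply_update_eq {ι Y : Type*} [Fintype ι] [DecidableEq ι]
    {α : ι → Type*} {f : (∀ i, α i) → Y} {S : Set ι}
    (h : ∀ x, ∀ i ∈ S, ∀ a, f (update x i a) = f x) {x y : ∀ i, α i}
    (hxy : ∀ i ∉ S, x i = y i) : f x = f y := by
  classical
  suffices key : ∀ T : Finset ι, ↑T ⊆ S → ∀ x, (∀ i ∉ T, x i = y i) → f x = f y by
    refine key {i | x i ≠ y i} (fun i hi => ?_) x (by simp)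
    by_contra hiS
    exact (Finset.mem_filter.mp hi).2 (hxy i hiS)
  intro T
  induction T using Finset.induction_on with
  | empty => exact fun _ x hx => congrArg f (funext fun i => hx i (Finset.notMem_empty i))
  | insert a T _ ih =>
    intro hT x hx
    rw [← h x a (hT (by simp)) (y a)]
    refine ih ((Finset.coe_subset.mpr (Finset.subset_insert a T)).trans hT) _ fun i hi => ?_
    rcases eq_or_ne i a with rfl | hia
    · exact update_self ..
    · rw [update_of_ne hia]
      exact hx i (by simp [hia, hi])

variable {s : ℕ} {n : Fin s → ℕ}

theorem exists_forall_ne_and_ne (h3 : ∀ i, 3 ≤ n i) (u v : ∀ j, Fin (n j)) :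
    ∃ z : ∀ j, Fin (n j), ∀ m, u m ≠ z m ∧ v m ≠ z m := by
  choose z hz using fun m => Fin.exists_ne_and_ne_of_two_lt (u m) (v m) (h3 m)
  exact ⟨z, fun m => ⟨(hz m).1.symm, (hz m).2.symm⟩⟩

theorem update_triple_mem_Es [Nontrivial (Fin s)] {u z : ∀ j, Fin (n j)} {j : Fin s}
    (hfar : ∀ m ≠ j, u m ≠ z m) {a b : Fin (n j)} (hab : a ≠ b) :
    {update u j a, update u j b, update z j a} ∈ Es n := by
  obtain ⟨m, hm⟩ := exists_ne j
  refine ⟨Finset.card_eq_three.mpr ⟨_, _, _, ?_, ?_, ?_, rfl⟩, fun i => ?_⟩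
  · exact fun h => hab (by simpa using congrFun h j)
  · exact fun h => hfar m hm (by simpa [hm] using congrFun h m)
  · exact fun h => hab (by simpa using (congrFun h j).symm)
  · rcases eq_or_ne i j with rfl | hi
    · simp [Finset.card_pair hab.symm]
    · simp [hi, Finset.card_pair (hfar i hi)]

theorem properSetoid_ker_eval (i : Fin s) :
    ProperSetoid (Es n) (Setoid.ker fun x : ∀ j, Fin (n j) => x i) := by
  rintro b ⟨hcard, himg⟩
  constructor
  · have hlt : (b.image fun x => x i).card < b.card := by rw [hcard, himg i]; omega
    obtain ⟨x, hx, y, hy, hxy, hfeq⟩ :=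
      Finset.exists_ne_map_eq_of_card_lt_of_maps_to hlt
        (fun a ha => Finset.mem_image_of_mem (fun x => x i) ha)
    exact ⟨x, hx, y, hy, hxy, Setoid.ker_def.mpr hfeq⟩
  · obtain ⟨a, ha, a', ha', haa⟩ := Finset.one_lt_card.mp (by rw [himg i]; omega)
    obtain ⟨x, hx, rfl⟩ := Finset.mem_image.mp ha
    obtain ⟨y, hy, rfl⟩ := Finset.mem_image.mp ha'
    exact ⟨x, hx, y, hy, fun h => haa (Setoid.ker_def.mp h)⟩

variable {Y : Type*} {f : (∀ j, Fin (n j)) → Y}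

def InjectiveAlong (f : (∀ j, Fin (n j)) → Y) (j : Fin s) : Prop :=
  ∀ u, Injective fun a => f (update u j a)

namespace ProperSetoid

variable [Nontrivial (Fin s)]

theorem update_triple_apply_eq_iff (hf : ProperSetoid (Es n) (Setoid.ker f))
    {u z : ∀ j, Fin (n j)} {j : Fin s} (hfar : ∀ m ≠ j, u m ≠ z m) {a b : Fin (n j)}
    (hab : a ≠ b) :
    f (update u j b) = f (update z j a) ↔
      f (update u j a) ≠ f (update u j b) ∧ f (update u j a) ≠ f (update z j a) :=
  hf.apply_eq_iff (update_triple_mem_Es hfar hab)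

theorem apply_update_eq_iff_of_far (hf : ProperSetoid (Es n) (Setoid.ker f))
    {u z : ∀ j, Fin (n j)} {j : Fin s} (hfar : ∀ m ≠ j, u m ≠ z m) {a b : Fin (n j)}
    (hab : a ≠ b) :
    f (update u j a) = f (update u j b) ↔ f (update z j a) = f (update z j b) := by
  have hfar' : ∀ m ≠ j, z m ≠ u m := fun m hm => (hfar m hm).symm
  have := hf.update_triple_apply_eq_iff hfar hab
  have := hf.update_triple_apply_eq_iff hfar hab.symm
  have := hf.update_triple_apply_eq_iff hfar' hab
  have := hf.update_triple_apply_eq_iff hfar' hab.symm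
  grind

theorem apply_update_ne (hf : ProperSetoid (Es n) (Setoid.ker f)) (h3 : ∀ i, 3 ≤ n i)
    {u z : ∀ j, Fin (n j)} {j : Fin s} (hfar : ∀ m ≠ j, u m ≠ z m) {a b : Fin (n j)}
    (hab : a ≠ b) : f (update u j a) ≠ f (update z j b) := by
  intro hR
  obtain ⟨c, hca, hcb⟩ := Fin.exists_ne_and_ne_of_two_lt a b (h3 j)
  obtain ⟨w, hw⟩ := exists_forall_ne_and_ne h3 u z
  have huw : ∀ m ≠ j, u m ≠ w m := fun m _ => (hw m).1
  have hzw : ∀ m ≠ j, z m ≠ w m := fun m _ => (hw m).2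
  -- Eleven edges of the grid `{u, z, w} × {a, b, c}` leave no proper colouring with `hR`.
  have := hf.update_triple_apply_eq_iff hfar hab
  have := hf.update_triple_apply_eq_iff hfar hab.symm
  have := hf.update_triple_apply_eq_iff hfar hca.symm
  have := hf.update_triple_apply_eq_iff hfar hca
  have := hf.update_triple_apply_eq_iff hfar hcb
  have := hf.update_triple_apply_eq_iff huw hab
  have := hf.update_triple_apply_eq_iff huw hab.symm
  have := hf.update_triple_apply_eq_iff huw hca.symm
  have := hf.update_triple_apply_eq_iff huw hcb.symm
  have := hf.update_triple_apply_eq_iff hzw hca.symm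
  have := hf.update_triple_apply_eq_iff hzw hcb.symm
  grind

theorem apply_update_ne_of_ne (hf : ProperSetoid (Es n) (Setoid.ker f)) (h3 : ∀ i, 3 ≤ n i)
    {u : ∀ j, Fin (n j)} {j : Fin s} {a b c : Fin (n j)}
    (hab : f (update u j a) ≠ f (update u j b)) (hca : c ≠ a) :
    f (update u j a) ≠ f (update u j c) := by
  obtain ⟨z, hz⟩ := exists_forall_ne_and_ne h3 u u
  have hfar : ∀ m ≠ j, u m ≠ z m := fun m _ => (hz m).1
  have hzu : ∀ m ≠ j, z m ≠ u m := fun m _ => (hz m).1.symm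
  have hab' : a ≠ b := by rintro rfl; exact hab rfl
  have := hf.update_triple_apply_eq_iff hfar hab'.symm
  have := hf.update_triple_apply_eq_iff hzu hab'
  have := hf.update_triple_apply_eq_iff hzu hab'.symm
  have := hf.update_triple_apply_eq_iff hfar hca.symm
  have := hf.apply_update_ne h3 hfar hab'
  grind

theorem injective_apply_update_of_ne (hf : ProperSetoid (Es n) (Setoid.ker f))
    (h3 : ∀ i, 3 ≤ n i) {u : ∀ j, Fin (n j)} {j : Fin s} {a b : Fin (n j)}
    (hab : f (update u j a) ≠ f (update u j b)) : Injective fun c => f (update u j c) := by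
  intro c d hcd
  by_contra hcd'
  rcases eq_or_ne c a with rfl | hca
  · exact hf.apply_update_ne_of_ne h3 hab (Ne.symm hcd') hcd
  · exact hf.apply_update_ne_of_ne h3 (hf.apply_update_ne_of_ne h3 hab hca).symm
      (Ne.symm hcd') hcd

theorem injectiveAlong_of_ne (hf : ProperSetoid (Es n) (Setoid.ker f)) (h3 : ∀ i, 3 ≤ n i)
    {u : ∀ j, Fin (n j)} {j : Fin s} {a b : Fin (n j)}
    (hab : f (update u j a) ≠ f (update u j b)) : InjectiveAlong f j := by
  intro w c d hcd
  by_contra hcd'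
  obtain ⟨z, hz⟩ := exists_forall_ne_and_ne h3 u w
  have hab' : a ≠ b := by rintro rfl; exact hab rfl
  have hz_ab : f (update z j a) ≠ f (update z j b) :=
    mt (hf.apply_update_eq_iff_of_far (fun m _ => (hz m).1) hab').mpr hab
  exact hcd' <| hf.injective_apply_update_of_ne h3 hz_ab <|
    (hf.apply_update_eq_iff_of_far (fun m _ => (hz m).2) hcd').mp hcd

theorem apply_eq_of_injectiveAlong (hf : ProperSetoid (Es n) (Setoid.ker f))
    (h3 : ∀ i, 3 ≤ n i) {j : Fin s} (hj : InjectiveAlong f j) {u z : ∀ j, Fin (n j)}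
    (hfar : ∀ m ≠ j, u m ≠ z m) (huz : u j = z j) : f u = f z := by
  obtain ⟨b, hb, -⟩ := Fin.exists_ne_and_ne_of_two_lt (u j) (u j) (h3 j)
  have hflip : f (update u j (u j)) ≠ f (update u j b) := (hj u).ne hb.symm
  have hdiag := hf.apply_update_ne h3 hfar hb
  have := hf.update_triple_apply_eq_iff hfar hb.symm
  rw [update_eq_self, huz, update_eq_self] at *
  grind

theorem apply_update_eq_of_injectiveAlong (hf : ProperSetoid (Es n) (Setoid.ker f))
    (h3 : ∀ i, 3 ≤ n i) {j k : Fin s} (hj : InjectiveAlong f j) (hkj : k ≠ j)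
    (u : ∀ j, Fin (n j)) (c : Fin (n k)) : f (update u k c) = f u := by
  obtain ⟨z, hz⟩ := exists_forall_ne_and_ne h3 (update u k c) u
  set z' := update z j (u j)
  have h₁ : f (update u k c) = f z' := hf.apply_eq_of_injectiveAlong h3 hj
    (fun m hm => by simpa [z', hm] using (hz m).1) (by simp [z', hkj.symm])
  have h₂ : f u = f z' := hf.apply_eq_of_injectiveAlong h3 hj
    (fun m hm => by simpa [z', hm] using (hz m).2) (by simp [z'])
  rw [h₁, h₂]

theorem exists_injectiveAlong (hf : ProperSetoid (Es n) (Setoid.ker f)) (h3 : ∀ i, 3 ≤ n i) :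
    ∃ j, InjectiveAlong f j := by
  by_contra! hnone
  have hflip : ∀ x (i : Fin s) (a : Fin (n i)), f (update x i a) = f x := fun x i a => by
    by_contra h
    exact hnone i (hf.injectiveAlong_of_ne h3 (a := a) (b := x i) (by rwa [update_eq_self]))
  have hconst : ∀ x y, f x = f y := fun x y =>
    apply_eq_of_forall_apply_update_eq (S := Set.univ) (fun x i _ a => hflip x i a) (by simp)
  obtain ⟨j, -⟩ := exists_pair_ne (Fin s)
  let u : ∀ j, Fin (n j) := fun m => ⟨0, by have := h3 m; omega⟩
  obtain ⟨z, hz⟩ := exists_forall_ne_and_ne h3 u u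
  obtain ⟨b, hb, -⟩ := Fin.exists_ne_and_ne_of_two_lt (u j) (u j) (h3 j)
  obtain ⟨-, x, -, y, -, hxy⟩ := hf _ (update_triple_mem_Es (fun m _ => (hz m).1) hb.symm)
  exact hxy (hconst x y)

theorem exists_forall_apply_eq_iff (hf : ProperSetoid (Es n) (Setoid.ker f))
    (h3 : ∀ i, 3 ≤ n i) : ∃ i, ∀ x y, f x = f y ↔ x i = y i := by
  obtain ⟨i, hi⟩ := hf.exists_injectiveAlong h3
  have hagree : ∀ x y : ∀ j, Fin (n j), x i = y i → f x = f y := fun x y hxy =>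
    apply_eq_of_forall_apply_update_eq
      (fun x k hk a => hf.apply_update_eq_of_injectiveAlong h3 hi hk x a)
      (fun k hk => by rwa [Set.notMem_compl_iff.mp hk])
  refine ⟨i, fun x y => ⟨fun hxy => hi y ?_, hagree x y⟩⟩
  simp only [update_eq_self]
  rw [← hxy]
  exact hagree _ _ (update_self ..)

theorem exists_eq_ker_eval {P : Setoid (∀ j, Fin (n j))} (hP : ProperSetoid (Es n) P)
    (h3 : ∀ i, 3 ≤ n i) : ∃ i, P = Setoid.ker fun x => x i := by
  rw [← Setoid.ker_mk_eq P] at hP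
  obtain ⟨i, hi⟩ := hP.exists_forall_apply_eq_iff h3
  exact ⟨i, Setoid.ext fun x y => Quotient.eq''.symm.trans (hi x y)⟩

end ProperSetoid

theorem Setoid.ker_eval_injective {ι : Type*} [DecidableEq ι] {α : ι → Type*}
    [∀ i, Nontrivial (α i)] : Injective fun i => Setoid.ker fun x : (∀ i, α i) => x i := by
  intro i i' h
  by_contra hne
  obtain ⟨x⟩ : Nonempty (∀ i, α i) := inferInstance
  obtain ⟨t, ht⟩ := exists_ne (x i')
  have hrel : Setoid.ker (fun x : (∀ i, α i) => x i) x (update x i' t) :=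
    Setoid.ker_def.mpr (update_of_ne hne ..).symm
  rw [show Setoid.ker (fun x : (∀ i, α i) => x i) = Setoid.ker fun x => x i' from h,
    Setoid.ker_def, update_self] at hrel
  exact ht hrel.symm

theorem Setoid.card_quotient_ker_eval {ι : Type*} {α : ι → Type*} [∀ i, Nonempty (α i)]
    (i : ι) : Nat.card (Quotient (Setoid.ker fun x : (∀ i, α i) => x i)) = Nat.card (α i) :=
  Nat.card_congr (Setoid.quotientKerEquivOfSurjective _ (surjective_eval i))

theorem stmt4_general (s : ℕ) (hs : 2 ≤ s) (n : Fin s → ℕ)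
    (h3 : ∀ i, 3 ≤ n i) :
    ({P : Setoid (∀ j, Fin (n j)) | ProperSetoid (Es n) P}
      = Set.range fun i : Fin s => Setoid.ker fun x : ∀ j, Fin (n j) => x i) ∧
    Function.Injective
      (fun i : Fin s => Setoid.ker fun x : ∀ j, Fin (n j) => x i) ∧
    ∀ i : Fin s,
      Nat.card (Quotient (Setoid.ker fun x : ∀ j, Fin (n j) => x i)) = n i := by
  have : Nontrivial (Fin s) := Fin.nontrivial_iff_two_le.mpr hs
  have (j : Fin s) : Nontrivial (Fin (n j)) := Fin.nontrivial_iff_two_le.mpr (by linarith [h3 j])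
  refine ⟨Set.ext fun P => ⟨fun hP => ?_, ?_⟩, Setoid.ker_eval_injective, fun i => ?_⟩
  · obtain ⟨i, rfl⟩ := hP.exists_eq_ker_eval h3
    exact ⟨i, rfl⟩
  · rintro ⟨i, rfl⟩
    exact properSetoid_ker_eval i
  · simp [Setoid.card_quotient_ker_eval]

/-- for `n₁ > n₂ > ⋯ > nₛ ≥ 3` (`s ≥ 2`), the feasible partitions
of `H_{n₁,…,nₛ}` are exactly the `s` coordinate partitions; they are pairwise
distinct and the `i`-th has `nᵢ` classes, so `Φ = {n₁,…,nₛ}` and each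
`r_{nᵢ} = 1`. -/
theorem stmt4 (s : ℕ) (hs : 2 ≤ s) (n : Fin s → ℕ)
    (hstrict : StrictAnti n) (h3 : ∀ i, 3 ≤ n i) :
    ({P : Setoid (∀ j, Fin (n j)) | ProperSetoid (Es n) P}
      = Set.range fun i : Fin s => Setoid.ker fun x : ∀ j, Fin (n j) => x i) ∧
    Function.Injective
      (fun i : Fin s => Setoid.ker fun x : ∀ j, Fin (n j) => x i) ∧
    ∀ i : Fin s,
      Nat.card (Quotient (Setoid.ker fun x : ∀ j, Fin (n j) => x i)) = n i :=
  stmt4_general s hs n h3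
end

section
/- Let $t \geq 2$, let $S = \{n_1, \ldots, n_t\}$ be a set of integers with $\min(S) \geq 3$, and let $s_1, \ldots, s_t$ be arbitrary positive integers. Then there exists a 3-uniform bi-hypergraph $\mathcal{H}$ whose feasible set is exactly $S$ and which has exactly $s_i$ feasible partitions into $n_i$ classes for each $i \in [t]$. -/
open Function

namespace Setoid

variable {X : Type*} {P : Setoid X} {a b c : X}

def Bicolored (P : Setoid X) (a b c : X) : Prop :=
  (P a b ∨ P a c ∨ P b c) ∧ ¬ (P a b ∧ P a c)

theorem bicolored_iff_of_ne [DecidableEq X] (hab : a ≠ b) (hac : a ≠ c) (hbc : b ≠ c) :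
    ((∃ x ∈ ({a, b, c} : Finset X), ∃ y ∈ ({a, b, c} : Finset X), x ≠ y ∧ P x y) ∧
      ∃ x ∈ ({a, b, c} : Finset X), ∃ y ∈ ({a, b, c} : Finset X), ¬ P x y) ↔
      P.Bicolored a b c := by
  have hT₁ : P a b → P a c → P b c := fun h h' => P.trans (P.symm h) h'
  have hT₂ : P a b → P b c → P a c := P.trans
  simp only [Finset.mem_insert, Finset.mem_singleton, exists_eq_or_imp, exists_eq_left,
    Bicolored, P.comm' (x := b) (y := a), P.comm' (x := c), P.refl, ne_eq, not_true,
    not_false_eq_true, true_and, hab, hac, hbc, Ne.symm hab, Ne.symm hac, Ne.symm hbc]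
  tauto

namespace Bicolored

theorem rel_of_not_rel (h : P.Bicolored a b c) (hac : ¬ P a c) (hbc : ¬ P b c) : P a b :=
  h.1.resolve_right (not_or.2 ⟨hac, hbc⟩)

theorem not_rel_of_rel (h : P.Bicolored a b c) (hab : P a b) : ¬ P a c :=
  fun hac => h.2 ⟨hab, hac⟩

theorem not_rel_of_rel_right (h : P.Bicolored a b c) (hbc : P b c) : ¬ P a c :=
  fun hac => h.2 ⟨P.trans hac (P.symm hbc), hac⟩

theorem rel_or_rel (h : P.Bicolored a b c) (hbc : ¬ P b c) : P a b ∨ P a c :=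
  h.1.imp_right (Or.resolve_right · hbc)

end Bicolored

theorem rel_of_rel_zero_one {f : Fin 2 → X} (h : P (f 0) (f 1)) (i j : Fin 2) :
    P (f i) (f j) := by
  fin_cases i <;> fin_cases j
  exacts [P.refl _, h, P.symm h, P.refl _]

theorem eq_ker_of_rel_rep {γ : Type*} (f : X → γ) (r : γ → X) (hr : ∀ x, P x (r (f x)))
    (hsep : ∀ u v, P (r u) (r v) → u = v) : P = ker f := by
  ext x y
  rw [ker_def]
  refine ⟨fun h => hsep _ _ (P.trans (P.symm (hr x)) (P.trans h (hr y))), fun h => ?_⟩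
  exact P.trans (hr x) (h ▸ P.symm (hr y))

end Setoid

namespace Bihypergraph

abbrev Slot (B : Type) (Λ : B → ℕ) : Type := Σ b, Fin (Λ b)

inductive Vertex (K : ℕ) (B : Type) (Λ : B → ℕ) : Type where
  | core : Fin 3 → Vertex K B Λ
  | pole : Fin 2 → Vertex K B Λ
  | fresh : Fin K → Fin 2 → Vertex K B Λ
  | sel : B → Vertex K B Λ
  | slot : Slot B Λ → Fin 2 → Vertex K B Λ
  deriving DecidableEq, Fintype

namespace Vertex

variable {K : ℕ} {B : Type} {Λ : B → ℕ}

inductive Edge : Vertex K B Λ → Vertex K B Λ → Vertex K B Λ → Prop where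
  | coreCore (i j : Fin 3) (h : i ≠ j) (k : Fin 2) : Edge (core i) (core j) (pole k)
  | corePole (i : Fin 3) : Edge (core i) (pole 1) (pole 0)
  | freshCore (j : Fin K) (ε : Fin 2) : Edge (fresh j ε) (core 1) (core 0)
  | freshPair (j : Fin K) : Edge (fresh j 0) (fresh j 1) (core 0)
  | freshPole (j : Fin K) : Edge (fresh j 0) (fresh j 1) (pole 0)
  | freshFresh (j k : Fin K) (h : j ≠ k) : Edge (fresh j 0) (fresh j 1) (fresh k 0)
  | freshSlot (j : Fin K) (τ : Slot B Λ) : Edge (fresh j 0) (fresh j 1) (slot τ 0)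
  | selBase (b : B) : Edge (sel b) (core 0) (pole 0)
  | selSel (b b' : B) (h : b ≠ b') : Edge (sel b) (sel b') (core 0)
  | slotCore (τ : Slot B Λ) : Edge (slot τ 1) (core 1) (core 0)
  | poleSlot (τ : Slot B Λ) : Edge (pole 0) (pole 1) (slot τ 0)
  | slotSel (τ : Slot B Λ) (ε : Fin 2) : Edge (slot τ ε) (sel τ.1) (core 0)
  | slotPair (τ : Slot B Λ) : Edge (slot τ 0) (slot τ 1) (core 0)
  | slotSlot (τ υ : Slot B Λ) (h : τ.1 = υ.1) (hne : τ ≠ υ) :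
      Edge (slot τ 0) (slot τ 1) (slot υ 0)

theorem Edge.pairwise_ne {a b c : Vertex K B Λ} (h : Edge a b c) :
    a ≠ b ∧ a ≠ c ∧ b ≠ c := by
  cases h <;> simp_all

variable [DecidableEq B]

def edges : Set (Finset (Vertex K B Λ)) := {e | ∃ a b c, Edge a b c ∧ e = {a, b, c}}

theorem card_of_mem_edges {e : Finset (Vertex K B Λ)} (he : e ∈ edges) : e.card = 3 := by
  obtain ⟨a, b, c, h, rfl⟩ := he
  obtain ⟨hab, hac, hbc⟩ := h.pairwise_ne
  exact Finset.card_eq_three.2 ⟨a, b, c, hab, hac, hbc, rfl⟩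

theorem properSetoid_edges_iff {P : Setoid (Vertex K B Λ)} :
    ProperSetoid edges P ↔ ∀ a b c, Edge a b c → P.Bicolored a b c := by
  refine ⟨fun hP a b c h => ?_, ?_⟩
  · obtain ⟨hab, hac, hbc⟩ := h.pairwise_ne
    exact (Setoid.bicolored_iff_of_ne hab hac hbc).1 (hP _ ⟨a, b, c, h, rfl⟩)
  · rintro hP _ ⟨a, b, c, h, rfl⟩
    obtain ⟨hab, hac, hbc⟩ := h.pairwise_ne
    exact (Setoid.bicolored_iff_of_ne hab hac hbc).2 (hP a b c h)

abbrev Color (K : ℕ) (B : Type) (Λ : B → ℕ) (o : Option B) : Type :=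
  Fin 2 ⊕ Fin K ⊕ {τ : Slot B Λ // o = some τ.1}

def coloring (o : Option B) : Vertex K B Λ → Color K B Λ o
  | core _ => .inl 0
  | pole _ => .inl 1
  | fresh j _ => .inr (.inl j)
  | sel b => if o = some b then .inl 0 else .inl 1
  | slot τ ε => if h : o = some τ.1 then .inr (.inr ⟨τ, h⟩) else .inl ε

def colorRep {o : Option B} : Color K B Λ o → Vertex K B Λ
  | .inl i => ![core 0, pole 0] i
  | .inr (.inl j) => fresh j 0
  | .inr (.inr τ) => slot τ.1 0

theorem coloring_colorRep {o : Option B} (u : Color K B Λ o) : coloring o (colorRep u) = u := by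
  rcases u with i | j | ⟨τ, hτ⟩
  · fin_cases i <;> rfl
  · rfl
  · simp [coloring, colorRep, hτ]

theorem properSetoid_ker_coloring (o : Option B) :
    ProperSetoid edges (Setoid.ker (coloring (K := K) (Λ := Λ) o)) := by
  rw [properSetoid_edges_iff]
  intro a b c h
  cases h <;> simp only [Setoid.Bicolored, Setoid.ker_def, coloring] <;> (try split_ifs) <;>
    simp_all [Subtype.ext_iff]
  omega

section Classification

variable {P : Setoid (Vertex K B Λ)}

theorem Edge.bicolored {a b c : Vertex K B Λ} (h : Edge a b c) (hP : ProperSetoid edges P) :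
    P.Bicolored a b c :=
  properSetoid_edges_iff.1 hP a b c h

theorem rel_pole (hP : ProperSetoid edges P) (k k' : Fin 2) : P (pole k) (pole k') := by
  refine Setoid.rel_of_rel_zero_one (f := pole) ?_ k k'
  by_contra hpole
  -- each core vertex joins one of the poles, so two of the three join the same one
  have hjoin (i : Fin 3) : ∃ k, P (core i) (pole k) :=
    (((Edge.corePole i).bicolored hP).rel_or_rel fun h => hpole (P.symm h)).elim
      (⟨1, ·⟩) (⟨0, ·⟩)
  choose f hf using hjoin
  obtain ⟨i, j, hij, hfij⟩ := Fintype.exists_ne_map_eq_of_card_lt f (by simp)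
  exact ((Edge.coreCore i j hij (f i)).bicolored hP).not_rel_of_rel
    (P.trans (hf i) (P.symm (hfij ▸ hf j))) (hf i)

theorem not_rel_core_pole (hP : ProperSetoid edges P) (i : Fin 3) (k : Fin 2) :
    ¬ P (core i) (pole k) := fun h =>
  ((Edge.corePole i).bicolored hP).not_rel_of_rel_right (rel_pole hP 1 0)
    (P.trans h (rel_pole hP k 0))

theorem rel_core (hP : ProperSetoid edges P) (i j : Fin 3) : P (core i) (core j) := by
  obtain rfl | hij := eq_or_ne i j
  · exact P.refl _
  · exact ((Edge.coreCore i j hij 0).bicolored hP).rel_of_not_rel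
      (not_rel_core_pole hP i 0) (not_rel_core_pole hP j 0)

theorem not_rel_fresh_core (hP : ProperSetoid edges P) (j : Fin K) (ε : Fin 2) :
    ¬ P (fresh j ε) (core 0) :=
  ((Edge.freshCore j ε).bicolored hP).not_rel_of_rel_right (rel_core hP 1 0)

theorem rel_fresh (hP : ProperSetoid edges P) (j : Fin K) (ε ε' : Fin 2) :
    P (fresh j ε) (fresh j ε') :=
  Setoid.rel_of_rel_zero_one (f := fresh j) (((Edge.freshPair j).bicolored hP).rel_of_not_rel
    (not_rel_fresh_core hP j 0) (not_rel_fresh_core hP j 1)) ε ε'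

theorem not_rel_fresh_pole (hP : ProperSetoid edges P) (j : Fin K) : ¬ P (fresh j 0) (pole 0) :=
  ((Edge.freshPole j).bicolored hP).not_rel_of_rel (rel_fresh hP j 0 1)

theorem not_rel_fresh_fresh (hP : ProperSetoid edges P) {j k : Fin K} (hjk : j ≠ k) :
    ¬ P (fresh j 0) (fresh k 0) :=
  ((Edge.freshFresh j k hjk).bicolored hP).not_rel_of_rel (rel_fresh hP j 0 1)

theorem not_rel_fresh_slot (hP : ProperSetoid edges P) (j : Fin K) (τ : Slot B Λ) :
    ¬ P (fresh j 0) (slot τ 0) :=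
  ((Edge.freshSlot j τ).bicolored hP).not_rel_of_rel (rel_fresh hP j 0 1)

theorem rel_sel_pole_of_not_rel_core (hP : ProperSetoid edges P) {b : B}
    (hb : ¬ P (sel b) (core 0)) : P (sel b) (pole 0) :=
  (((Edge.selBase b).bicolored hP).rel_or_rel (not_rel_core_pole hP 0 0)).resolve_left hb

theorem not_rel_pole_slot (hP : ProperSetoid edges P) (τ : Slot B Λ) :
    ¬ P (pole 0) (slot τ 0) :=
  ((Edge.poleSlot τ).bicolored hP).not_rel_of_rel (rel_pole hP 0 1)

theorem not_rel_slot_core_of_rel_sel (hP : ProperSetoid edges P) {τ : Slot B Λ}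
    (hτ : P (sel τ.1) (core 0)) (ε : Fin 2) : ¬ P (slot τ ε) (core 0) :=
  ((Edge.slotSel τ ε).bicolored hP).not_rel_of_rel_right hτ

theorem rel_slot_of_rel_sel (hP : ProperSetoid edges P) {τ : Slot B Λ}
    (hτ : P (sel τ.1) (core 0)) (ε ε' : Fin 2) : P (slot τ ε) (slot τ ε') :=
  Setoid.rel_of_rel_zero_one (f := slot τ) (((Edge.slotPair τ).bicolored hP).rel_of_not_rel
    (not_rel_slot_core_of_rel_sel hP hτ 0) (not_rel_slot_core_of_rel_sel hP hτ 1)) ε ε'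

theorem not_rel_slot_slot_of_rel_sel (hP : ProperSetoid edges P) {τ υ : Slot B Λ}
    (hτ : P (sel τ.1) (core 0)) (h : τ.1 = υ.1) (hne : τ ≠ υ) :
    ¬ P (slot τ 0) (slot υ 0) :=
  ((Edge.slotSlot τ υ h hne).bicolored hP).not_rel_of_rel (rel_slot_of_rel_sel hP hτ 0 1)

theorem rel_slot_of_not_rel_sel (hP : ProperSetoid edges P) {τ : Slot B Λ}
    (hτ : ¬ P (sel τ.1) (core 0)) (ε : Fin 2) : P (slot τ ε) (![core 0, pole 0] ε) := by
  have hsel := ((Edge.slotSel τ ε).bicolored hP).rel_or_rel hτ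
  fin_cases ε
  · exact hsel.resolve_left fun h =>
      not_rel_pole_slot hP τ (P.symm (P.trans h (rel_sel_pole_of_not_rel_core hP hτ)))
  · exact hsel.elim (fun h => P.trans h (rel_sel_pole_of_not_rel_core hP hτ))
      fun h => absurd h (((Edge.slotCore τ).bicolored hP).not_rel_of_rel_right (rel_core hP 1 0))

theorem exists_sel_rel_core_iff (hP : ProperSetoid edges P) :
    ∃ o : Option B, ∀ b, P (sel b) (core 0) ↔ o = some b := by
  by_cases h : ∃ b, P (sel b) (core 0)
  · obtain ⟨b₀, hb₀⟩ := h
    refine ⟨some b₀, fun b => ⟨fun hb => ?_, fun hb => Option.some_inj.1 hb ▸ hb₀⟩⟩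
    by_contra hne
    exact ((Edge.selSel b b₀ fun h => hne (congrArg some h.symm)).bicolored hP).not_rel_of_rel
      (P.trans hb (P.symm hb₀)) hb
  · exact ⟨none, fun b => by simp [not_exists.1 h b]⟩

theorem rel_colorRep (hP : ProperSetoid edges P) {o : Option B}
    (hsel : ∀ b, P (sel b) (core 0) ↔ o = some b) (v : Vertex K B Λ) :
    P v (colorRep (coloring o v)) := by
  cases v with
  | core i => exact rel_core hP i 0
  | pole k => exact rel_pole hP k 0
  | fresh j ε => exact rel_fresh hP j ε 0
  | sel b =>
    by_cases hb : o = some b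
    · simpa [coloring, colorRep, hb] using (hsel b).2 hb
    · simpa [coloring, colorRep, hb] using rel_sel_pole_of_not_rel_core hP (mt (hsel b).1 hb)
  | slot τ ε =>
    by_cases hτ : o = some τ.1
    · simpa [coloring, colorRep, hτ] using rel_slot_of_rel_sel hP ((hsel _).2 hτ) ε 0
    · simpa [coloring, colorRep, hτ] using rel_slot_of_not_rel_sel hP (mt (hsel _).1 hτ) ε

theorem eq_of_rel_colorRep (hP : ProperSetoid edges P) {o : Option B}
    (hsel : ∀ b, P (sel b) (core 0) ↔ o = some b) {u v : Color K B Λ o}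
    (h : P (colorRep u) (colorRep v)) : u = v := by
  have hcp := not_rel_core_pole hP 0 0
  rcases u with i | j | ⟨τ, hτ⟩ <;> rcases v with i' | j' | ⟨υ, hυ⟩ <;>
    simp only [colorRep] at h
  · fin_cases i <;> fin_cases i'
    exacts [rfl, absurd h hcp, absurd (P.symm h) hcp, rfl]
  · fin_cases i
    exacts [absurd (P.symm h) (not_rel_fresh_core hP j' 0),
      absurd (P.symm h) (not_rel_fresh_pole hP j')]
  · fin_cases i
    exacts [absurd (P.symm h) (not_rel_slot_core_of_rel_sel hP ((hsel _).2 hυ) 0),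
      absurd h (not_rel_pole_slot hP υ)]
  · fin_cases i'
    exacts [absurd h (not_rel_fresh_core hP j 0), absurd h (not_rel_fresh_pole hP j)]
  · by_contra hne
    exact not_rel_fresh_fresh hP (fun hjj => hne (by rw [hjj])) h
  · exact absurd h (not_rel_fresh_slot hP j υ)
  · fin_cases i'
    exacts [absurd h (not_rel_slot_core_of_rel_sel hP ((hsel _).2 hτ) 0),
      absurd (P.symm h) (not_rel_pole_slot hP τ)]
  · exact absurd (P.symm h) (not_rel_fresh_slot hP j' τ)
  · by_contra hne
    exact not_rel_slot_slot_of_rel_sel hP ((hsel _).2 hτ) (Option.some_inj.1 (hτ.symm.trans hυ))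
      (fun hτυ => hne (by subst hτυ; rfl)) h

theorem exists_eq_ker_coloring (hP : ProperSetoid edges P) :
    ∃ o : Option B, P = Setoid.ker (coloring o) := by
  obtain ⟨o, hsel⟩ := exists_sel_rel_core_iff hP
  exact ⟨o, Setoid.eq_ker_of_rel_rep _ colorRep (rel_colorRep hP hsel)
    fun _ _ => eq_of_rel_colorRep hP hsel⟩

end Classification

theorem ker_coloring_injective :
    Injective fun o : Option B => Setoid.ker (coloring (K := K) (Λ := Λ) o) := by
  have hsel (o : Option B) (b : B) :
      Setoid.ker (coloring (K := K) (Λ := Λ) o) (sel b) (core 0) ↔ o = some b := by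
    by_cases hb : o = some b <;> simp [coloring, hb]
  intro o o' (h : Setoid.ker (coloring o) = Setoid.ker (coloring o'))
  exact Option.ext fun b => by rw [← hsel o, ← hsel o', h]

noncomputable def properSetoidEquiv :
    Option B ≃ {P : Setoid (Vertex K B Λ) // ProperSetoid edges P} :=
  Equiv.ofBijective (fun o => ⟨Setoid.ker (coloring o), properSetoid_ker_coloring o⟩)
    ⟨fun _ _ h => ker_coloring_injective (congrArg Subtype.val h), fun ⟨_, hP⟩ =>
      (exists_eq_ker_coloring hP).imp fun _ ho => Subtype.ext ho.symm⟩

theorem card_quotient_properSetoidEquiv [Finite B] (o : Option B) :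
    Nat.card (Quotient (properSetoidEquiv (K := K) (Λ := Λ) o).1) = 2 + K + o.elim 0 Λ := by
  have hsurj : Surjective (coloring (K := K) (Λ := Λ) o) :=
    RightInverse.surjective coloring_colorRep
  have hslots : Nat.card {τ : Slot B Λ // o = some τ.1} = o.elim 0 Λ := by
    cases o with
    | none => simp
    | some b => simpa [eq_comm] using Nat.card_congr (Equiv.sigmaSubtype (β := (Fin <| Λ ·)) b)
  rw [show (properSetoidEquiv o).1 = Setoid.ker (coloring o) from rfl,
    Nat.card_congr (Setoid.quotientKerEquivOfSurjective _ hsurj), Nat.card_sum, Nat.card_sum,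
    hslots]
  simp [add_assoc]

end Vertex

open Vertex in
theorem exists_properSetoid_equiv {ι : Type} [Finite ι] [Nonempty ι] (m : ι → ℕ)
    (hm : ∀ x, 2 ≤ m x) :
    ∃ (X : Type) (_ : Fintype X) (E : Set (Finset X)), (∀ e ∈ E, e.card = 3) ∧
      ∃ f : ι ≃ {P : Setoid X // ProperSetoid E P},
        ∀ x, Nat.card (Quotient (f x).1) = m x := by
  classical
  have := Fintype.ofFinite ι
  obtain ⟨x₀, hx₀⟩ := Finite.exists_min m
  let Λ (x : {x // x ≠ x₀}) : ℕ := m x - m x₀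
  refine ⟨Vertex (m x₀ - 2) _ Λ, inferInstance, edges, fun _ => card_of_mem_edges,
    (Equiv.optionSubtypeNe x₀).symm.trans properSetoidEquiv, fun x => ?_⟩
  obtain ⟨o, rfl⟩ := (Equiv.optionSubtypeNe x₀).surjective x
  rw [Equiv.trans_apply, Equiv.symm_apply_apply, card_quotient_properSetoidEquiv]
  have := hm x₀
  cases o with
  | none => simp only [Option.elim_none, Equiv.optionSubtypeNe_none]; omega
  | some x => simp only [Option.elim_some, Equiv.optionSubtypeNe_some, Λ]; have := hx₀ x; omega

end Bihypergraph

/-- for any set `S = {n₁,…,n_t}` (`t ≥ 2`) of integers with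
`min S ≥ 3` and any positive integers `s₁,…,s_t`, there is a 3-uniform
bi-hypergraph whose feasible set is exactly `S` and which has exactly `sᵢ`
feasible partitions into `nᵢ` classes for each `i`. -/
theorem stmt5 (t : ℕ) (ht : 2 ≤ t) (n : Fin t → ℕ)
    (hinj : Function.Injective n) (h3 : ∀ i, 3 ≤ n i)
    (s : Fin t → ℕ) (hs : ∀ i, 0 < s i) :
    ∃ (X : Type) (_ : Fintype X) (E : Set (Finset X)),
      (∀ b ∈ E, b.card = 3) ∧
      ({k | ∃ P : Setoid X, ProperSetoid E P ∧ Nat.card (Quotient P) = k}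
        = Set.range n) ∧
      ∀ i : Fin t,
        Nat.card {P : Setoid X // ProperSetoid E P ∧ Nat.card (Quotient P) = n i}
          = s i := by
  have : Nonempty (Σ i, Fin (s i)) := ⟨⟨⟨0, by omega⟩, ⟨0, hs _⟩⟩⟩
  obtain ⟨X, hX, E, hE, f, hf⟩ := Bihypergraph.exists_properSetoid_equiv
    (fun σ : Σ i, Fin (s i) => n σ.1) fun σ => (h3 σ.1).trans' (by norm_num)
  refine ⟨X, hX, E, hE, Set.ext fun k => ⟨?_, ?_⟩, fun i => ?_⟩
  · rintro ⟨P, hP, rfl⟩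
    exact ⟨(f.symm ⟨P, hP⟩).1, by rw [← hf, f.apply_symm_apply]⟩
  · rintro ⟨i, rfl⟩
    exact ⟨_, (f ⟨i, 0, hs i⟩).2, hf _⟩
  · calc Nat.card {P // ProperSetoid E P ∧ Nat.card (Quotient P) = n i}
        = Nat.card {σ : Σ i, Fin (s i) // n σ.1 = n i} :=
          Nat.card_congr ((Equiv.subtypeSubtypeEquivSubtypeInter _ _).symm.trans
            (f.subtypeEquiv fun σ => by rw [hf]).symm)
      _ = Nat.card {σ : Σ i, Fin (s i) // σ.1 = i} := by simp_rw [hinj.eq_iff]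
      _ = s i := by rw [Nat.card_congr (Equiv.sigmaSubtype i), Nat.card_fin]
end

section
/- Let $n_1 \geq n_2 > 3$ and let $\mathcal{H}^*_{n_1,n_2}$ be as constructed (the derived sub-hypergraph of $\mathcal{H}_{n_1,n_2}$ on the vertex set $X^* = \{(i,k): i,k \in [3]\} \cup \{(1,k),(k,1),(k,k): 4 \leq k \leq n_2\} \cup \{(n_2+j,1),(n_2+j,n_2): j \in [n_1-n_2]\}$). Suppose $c$ is a proper coloring of $\mathcal{H}^*_{n_1,n_2}$ such that for each $i \in \{1,2,3\}$, the vertices $(i,1), (i,2), (i,3)$ all receive color class $C_i$, where $C_1, C_2, C_3$ are pairwise distinct. Then $c$ is the restriction to $X^*$ of the partition of $[n_1] \times [n_2]$ by first coordinate. -/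
/-- The vertex set `X*` of `H*_{n₁,n₂}` (1-based values are `val + 1`). -/
def Xstar2 (n1 n2 : ℕ) : Set (Fin n1 × Fin n2) :=
  {x | (x.1.val + 1 ≤ 3 ∧ x.2.val + 1 ≤ 3) ∨
       (x.1.val + 1 = 1 ∧ 4 ≤ x.2.val + 1) ∨
       (x.2.val + 1 = 1 ∧ 4 ≤ x.1.val + 1 ∧ x.1.val + 1 ≤ n2) ∨
       (x.1.val = x.2.val ∧ 4 ≤ x.1.val + 1 ∧ x.1.val + 1 ≤ n2) ∨
       (n2 + 1 ≤ x.1.val + 1 ∧ (x.2.val + 1 = 1 ∨ x.2.val + 1 = n2))}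

/-- Edges of the derived sub-hypergraph `H*_{n₁,n₂} = H_{n₁,n₂}[X*]`. -/
def E2sub (n1 n2 : ℕ) : Set (Finset {x : Fin n1 × Fin n2 // x ∈ Xstar2 n1 n2}) :=
  {b | b.map (Function.Embedding.subtype _) ∈ E2 n1 n2}

namespace ProperColoring

variable {X α : Type*} [DecidableEq X] {E : Set (Finset X)} {c : X → α} {x y z : X}

theorem eq_or_eq_or_eq (hc : ProperColoring E c) (h : {x, y, z} ∈ E) :
    c x = c y ∨ c x = c z ∨ c y = c z := by
  obtain ⟨⟨u, hu, v, hv, huv, hcuv⟩, -⟩ := hc _ h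
  simp only [Finset.mem_insert, Finset.mem_singleton] at hu hv
  rcases hu with rfl | rfl | rfl <;> rcases hv with rfl | rfl | rfl <;> simp_all [eq_comm]

theorem not_eq_and_eq (hc : ProperColoring E c) (h : {x, y, z} ∈ E) :
    ¬(c x = c y ∧ c x = c z) := by
  rintro ⟨hxy, hxz⟩
  obtain ⟨-, u, hu, v, hv, huv⟩ := hc _ h
  simp only [Finset.mem_insert, Finset.mem_singleton] at hu hv
  rcases hu with rfl | rfl | rfl <;> rcases hv with rfl | rfl | rfl <;> simp_all

end ProperColoring

theorem triple_mem_E2 {n1 n2 : ℕ} {a b : Fin n1} {p q : Fin n2} (hab : a ≠ b) (hpq : p ≠ q) :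
    {(a, p), (a, q), (b, p)} ∈ E2 n1 n2 := by
  refine ⟨?_, ?_, ?_⟩
  · rw [Finset.card_eq_three]
    exact ⟨_, _, _, by simp [hpq], by simp [hab], by simp [hab], rfl⟩
  · simp [Finset.card_pair hab]
  · simp only [Finset.image_insert, Finset.image_singleton]
    rw [Finset.pair_comm, Finset.insert_idem]
    exact Finset.card_pair hpq

namespace Xstar2

variable {n1 n2 : ℕ}

abbrev Vertex (n1 n2 : ℕ) := {x : Fin n1 × Fin n2 // x ∈ Xstar2 n1 n2}

-- 0-based: the paper's vertex `(i, k)` has `row = i - 1` and `col = k - 1`.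
def Vertex.row (x : Vertex n1 n2) : ℕ := x.1.1

def Vertex.col (x : Vertex n1 n2) : ℕ := x.1.2

theorem Vertex.ext {x y : Vertex n1 n2} (hr : x.row = y.row) (hc : x.col = y.col) : x = y :=
  Subtype.ext (Prod.ext (Fin.ext hr) (Fin.ext hc))

theorem Vertex.exists_corner (hn1 : 3 ≤ n1) (hn2 : 3 ≤ n2) {i j : ℕ} (hi : i < 3) (hj : j < 3) :
    ∃ v : Vertex n1 n2, v.row = i ∧ v.col = j :=
  ⟨⟨(⟨i, by omega⟩, ⟨j, by omega⟩), by simp [Xstar2]; omega⟩, rfl, rfl⟩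

theorem Vertex.exists_row_eq_zero (x : Vertex n1 n2) :
    ∃ w : Vertex n1 n2, w.row = 0 ∧ w.col = x.col :=
  ⟨⟨(⟨0, by have := x.1.1.isLt; omega⟩, x.1.2), by simp [Xstar2]; omega⟩, rfl, rfl⟩

theorem Vertex.row_col_cases (hn2 : 3 < n2) (x : Vertex n1 n2) :
    x.row < 3 ∧ x.col < 3 ∨ x.row = 0 ∧ 3 ≤ x.col ∨ 3 ≤ x.row ∧ (x.col = 0 ∨ 3 ≤ x.col) := by
  obtain ⟨⟨i, j⟩, h⟩ := x
  simp only [Xstar2, Set.mem_ofPred_eq] at h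
  simp only [Vertex.row, Vertex.col]
  omega

theorem Vertex.exists_col_eq_zero (x : Vertex n1 n2) :
    ∃ z : Vertex n1 n2, z.row = x.row ∧ z.col = 0 :=
  ⟨⟨(x.1.1, ⟨0, by have := x.1.2.isLt; omega⟩), by simp [Xstar2]; omega⟩, rfl, rfl⟩

theorem Vertex.exists_three_le_col (hn2 : 3 < n2) (x : Vertex n1 n2) (hx : 3 ≤ x.row) :
    ∃ w : Vertex n1 n2, w.row = x.row ∧ 3 ≤ w.col := by
  obtain ⟨⟨i, j⟩, _⟩ := x
  simp only [Vertex.row] at hx ⊢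
  by_cases h : i.val < n2
  · exact ⟨⟨(i, ⟨i, h⟩), by simp [Xstar2]; omega⟩, rfl, hx⟩
  · exact ⟨⟨(i, ⟨n2 - 1, by omega⟩), by simp [Xstar2]; omega⟩, rfl, by simp [Vertex.col]; omega⟩

theorem triple_mem_E2sub {x y z : Vertex n1 n2} (hxy : x.row = y.row) (hxz : x.col = z.col)
    (hy : x.col ≠ y.col) (hz : x.row ≠ z.row) : {x, y, z} ∈ E2sub n1 n2 := by
  obtain ⟨⟨a, p⟩, _⟩ := x
  obtain ⟨⟨a', q⟩, _⟩ := y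
  obtain ⟨⟨b, p'⟩, _⟩ := z
  simp only [Vertex.row, Vertex.col, Fin.val_inj, Fin.val_ne_iff] at hxy hxz hy hz
  subst hxy hxz
  simpa [E2sub] using triple_mem_E2 hz hy

variable {α : Type*}

def RowPartitionOnCorner (c : Vertex n1 n2 → α) : Prop :=
  ∀ x y : Vertex n1 n2, x.row < 3 → y.row < 3 → x.col < 3 → y.col < 3 → (c x = c y ↔ x.row = y.row)

variable {c : Vertex n1 n2 → α} (hc : ProperColoring (E2sub n1 n2) c)
  (hcorner : RowPartitionOnCorner c) (hn1 : 3 ≤ n1) (hn2 : 3 < n2)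
include hc hcorner hn1 hn2

theorem color_eq_of_row_eq_zero {x y : Vertex n1 n2} (hx : x.row = 0) (hy : y.row = 0) :
    c x = c y := by
  obtain ⟨v00, hv00⟩ : ∃ v : Vertex n1 n2, v.row = 0 ∧ v.col = 0 :=
    Vertex.exists_corner hn1 hn2.le (by omega) (by omega)
  suffices key : ∀ x : Vertex n1 n2, x.row = 0 → c x = c v00 from (key x hx).trans (key y hy).symm
  intro x hx
  by_cases hcol : x.col < 3
  · exact (hcorner _ _ (by omega) (by omega) hcol (by omega)).2 (by omega)
  obtain ⟨v01, hv01⟩ : ∃ v : Vertex n1 n2, v.row = 0 ∧ v.col = 1 :=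
    Vertex.exists_corner hn1 hn2.le (by omega) (by omega)
  obtain ⟨v10, hv10⟩ : ∃ v : Vertex n1 n2, v.row = 1 ∧ v.col = 0 :=
    Vertex.exists_corner hn1 hn2.le (by omega) (by omega)
  obtain ⟨v21, hv21⟩ : ∃ v : Vertex n1 n2, v.row = 2 ∧ v.col = 1 :=
    Vertex.exists_corner hn1 hn2.le (by omega) (by omega)
  have h01 : c v00 = c v01 := (hcorner _ _ (by omega) (by omega) (by omega) (by omega)).2 (by omega)
  have h10 : c v00 ≠ c v10 :=
    fun h ↦ by have := (hcorner _ _ (by omega) (by omega) (by omega) (by omega)).1 h; omega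
  have h21 : c v01 ≠ c v21 :=
    fun h ↦ by have := (hcorner _ _ (by omega) (by omega) (by omega) (by omega)).1 h; omega
  have h1021 : c v10 ≠ c v21 :=
    fun h ↦ by have := (hcorner _ _ (by omega) (by omega) (by omega) (by omega)).1 h; omega
  have e1 := hc.eq_or_eq_or_eq
    (triple_mem_E2sub (x := v00) (y := x) (z := v10) (by omega) (by omega) (by omega) (by omega))
  have e2 := hc.eq_or_eq_or_eq
    (triple_mem_E2sub (x := v01) (y := x) (z := v21) (by omega) (by omega) (by omega) (by omega))
  grind

theorem color_ne_of_row_lt_three {x y : Vertex n1 n2} (hx : 3 ≤ x.row) (hy : y.row < 3)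
    (hxc : x.col = 0) (hyc : y.col = 0) : c x ≠ c y := by
  obtain ⟨w, hw⟩ : ∃ v : Vertex n1 n2, v.row = y.row ∧ v.col = 1 :=
    Vertex.exists_corner hn1 hn2.le hy (by omega)
  have hyw : c y = c w := (hcorner _ _ (by omega) (by omega) (by omega) (by omega)).2 (by omega)
  exact fun h ↦ hc.not_eq_and_eq
    (triple_mem_E2sub (x := y) (y := w) (z := x) (by omega) (by omega) (by omega) (by omega))
    ⟨hyw, h.symm⟩

theorem color_ne_of_row_eq_zero {x y : Vertex n1 n2} (hx : 3 ≤ x.row) (hxc : 3 ≤ x.col)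
    (hy : y.row = 0) (hyc : y.col = 0) : c x ≠ c y := by
  obtain ⟨w, hw⟩ := x.exists_row_eq_zero
  have hwy : c w = c y := color_eq_of_row_eq_zero hc hcorner hn1 hn2 hw.1 hy
  exact fun h ↦ hc.not_eq_and_eq
    (triple_mem_E2sub (x := w) (y := y) (z := x) (by omega) (by omega) (by omega) (by omega))
    ⟨hwy, hwy.trans h.symm⟩

theorem color_eq_of_three_le_col {x y : Vertex n1 n2} (hx : 3 ≤ x.row) (hxc : 3 ≤ x.col)
    (hy : y.row = x.row) (hyc : y.col = 0) : c x = c y := by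
  obtain ⟨v00, hv00⟩ : ∃ v : Vertex n1 n2, v.row = 0 ∧ v.col = 0 :=
    Vertex.exists_corner hn1 hn2.le (by omega) (by omega)
  rcases hc.eq_or_eq_or_eq
    (triple_mem_E2sub (x := y) (y := x) (z := v00) (by omega) (by omega) (by omega) (by omega))
    with h | h | h
  · exact h.symm
  · exact absurd h (color_ne_of_row_lt_three hc hcorner hn1 hn2 (by omega) (by omega) hyc hv00.2)
  · exact absurd h (color_ne_of_row_eq_zero hc hcorner hn1 hn2 hx hxc hv00.1 hv00.2)

theorem color_eq_of_col_eq_zero {x y : Vertex n1 n2} (hy : y.row = x.row) (hyc : y.col = 0) :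
    c x = c y := by
  rcases x.row_col_cases hn2 with ⟨hx, hxc⟩ | ⟨hx, hxc⟩ | ⟨hx, hxc | hxc⟩
  · exact (hcorner _ _ hx (by omega) hxc (by omega)).2 hy.symm
  · exact color_eq_of_row_eq_zero hc hcorner hn1 hn2 hx (by omega)
  · rw [Vertex.ext hy.symm (hxc.trans hyc.symm)]
  · exact color_eq_of_three_le_col hc hcorner hn1 hn2 hx hxc hy hyc

theorem color_ne_of_three_le_row {x y : Vertex n1 n2} (hx : 3 ≤ x.row) (hxy : x.row ≠ y.row)
    (hxc : x.col = 0) (hyc : y.col = 0) : c x ≠ c y := by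
  obtain ⟨w, hw⟩ := x.exists_three_le_col hn2 hx
  have hxw : c x = c w :=
    (color_eq_of_three_le_col hc hcorner hn1 hn2 (by omega) hw.2 hw.1.symm hxc).symm
  exact fun h ↦ hc.not_eq_and_eq
    (triple_mem_E2sub (x := x) (y := w) (z := y) (by omega) (by omega) (by omega) hxy) ⟨hxw, h⟩

theorem color_ne_of_col_eq_zero {x y : Vertex n1 n2} (hxy : x.row ≠ y.row) (hxc : x.col = 0)
    (hyc : y.col = 0) : c x ≠ c y := by
  by_cases hx : 3 ≤ x.row
  · exact color_ne_of_three_le_row hc hcorner hn1 hn2 hx hxy hxc hyc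
  by_cases hy : 3 ≤ y.row
  · exact (color_ne_of_three_le_row hc hcorner hn1 hn2 hy hxy.symm hyc hxc).symm
  exact fun h ↦ hxy ((hcorner _ _ (by omega) (by omega) (by omega) (by omega)).1 h)

theorem color_eq_iff_row_eq (x y : Vertex n1 n2) : c x = c y ↔ x.row = y.row := by
  obtain ⟨x0, hx0⟩ := x.exists_col_eq_zero
  obtain ⟨y0, hy0⟩ := y.exists_col_eq_zero
  rw [color_eq_of_col_eq_zero hc hcorner hn1 hn2 hx0.1 hx0.2,
    color_eq_of_col_eq_zero hc hcorner hn1 hn2 hy0.1 hy0.2]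
  constructor
  · contrapose
    exact fun h ↦ color_ne_of_col_eq_zero hc hcorner hn1 hn2 (by omega) hx0.2 hy0.2
  · exact fun h ↦ color_eq_of_col_eq_zero hc hcorner hn1 hn2 (by omega) hy0.2

end Xstar2

/-- if a proper coloring `c` of `H*_{n₁,n₂}` (`n₁ ≥ n₂ > 3`)
colors the vertices `(i,1),(i,2),(i,3)` with a common color `Cᵢ` for each
`i ∈ {1,2,3}`, with `C₁, C₂, C₃` pairwise distinct (i.e. on the 3×3 corner `c`
agrees with the first-coordinate partition), then `c` is the restriction to
`X*` of the partition by first coordinate. -/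
theorem stmt10 (n1 n2 : ℕ) (h12 : n2 ≤ n1) (h2 : 3 < n2) {α : Type*}
    (c : {x : Fin n1 × Fin n2 // x ∈ Xstar2 n1 n2} → α)
    (hc : ProperColoring (E2sub n1 n2) c)
    (hcorner : ∀ x y : {x : Fin n1 × Fin n2 // x ∈ Xstar2 n1 n2},
      x.val.1.val < 3 → y.val.1.val < 3 → x.val.2.val < 3 → y.val.2.val < 3 →
      (c x = c y ↔ x.val.1 = y.val.1)) :
    ∀ x y : {x : Fin n1 × Fin n2 // x ∈ Xstar2 n1 n2},
      c x = c y ↔ x.val.1 = y.val.1 := by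
  have hrow : Xstar2.RowPartitionOnCorner c := fun x y hx hy hxc hyc ↦
    (hcorner x y hx hy hxc hyc).trans Fin.val_inj.symm
  exact fun x y ↦ (Xstar2.color_eq_iff_row_eq hc hrow (by omega) h2 x y).trans Fin.val_inj
end

section
/- Let $s \geq 2$ and $n_1 \geq n_2 > n_3 > \cdots > n_s > 3$. For every finite set $S$ of integers with $|S| \geq 2$ and $\min(S) > 3$, there exists a 3-uniform bi-hypergraph on at most $2\max(S) + n_2 + |S| - 2$ vertices whose feasible set equals $S$, where $n_2$ is the second largest element of $S$. In particular, the minimum number of vertices of a 3-uniform bi-hypergraph with feasible set $S = \{n_1 > n_2 > \cdots > n_s\}$ (all $> 3$) is at most $2n_1 + n_2 + s - 2$. -/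
section

variable {X : Type*}

def feasibleSet (E : Set (Finset X)) : Set ℕ :=
  {k | ∃ P : Setoid X, ProperSetoid E P ∧ Nat.card (Quotient P) = k}

/-- Neither monochromatic nor rainbow: what `ProperSetoid` asks of an edge `{p, q, r}`. -/
def Setoid.Splits (P : Setoid X) (p q r : X) : Prop :=
  (P p q ∨ P p r ∨ P q r) ∧ ¬(P p q ∧ P q r)

theorem Setoid.eq_ker_of_rel_rep_s12 {P : Setoid X} (f : X → X) (hf : ∀ a, P a (f a))
    (hsep : ∀ a b, P (f a) (f b) → f a = f b) : P = Setoid.ker f := by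
  ext a b
  refine ⟨fun h => hsep a b (P.trans (P.symm (hf a)) (P.trans h (hf b))), fun h => ?_⟩
  rw [Setoid.ker_def] at h
  exact P.trans (hf a) (h ▸ P.symm (hf b))

variable [DecidableEq X] {E : Set (Finset X)} {P : Setoid X} {p q r : X}

theorem ProperSetoid.splits (hP : ProperSetoid E P) (hb : {p, q, r} ∈ E) :
    P.Splits p q r := by
  obtain ⟨⟨x, hx, y, hy, hxy, hPxy⟩, ⟨x', hx', y', hy', hnP⟩⟩ := hP _ hb
  simp only [Finset.mem_insert, Finset.mem_singleton] at hx hy hx' hy'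
  constructor
  · have hPyx := P.symm hPxy
    rcases hx with rfl | rfl | rfl <;> rcases hy with rfl | rfl | rfl <;> tauto
  · rintro ⟨hpq, hqr⟩
    have hp : ∀ z, z = p ∨ z = q ∨ z = r → P p z := by
      rintro z (rfl | rfl | rfl)
      exacts [P.refl _, hpq, P.trans hpq hqr]
    exact hnP (P.trans (P.symm (hp x' hx')) (hp y' hy'))

theorem properSetoid_of_splits
    (hE : ∀ b ∈ E, ∃ p q r, p ≠ q ∧ p ≠ r ∧ q ≠ r ∧ P.Splits p q r ∧ b = {p, q, r}) :
    ProperSetoid E P := by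
  intro b hb
  obtain ⟨p, q, r, hpq, hpr, hqr, ⟨hsome, hnall⟩, rfl⟩ := hE b hb
  refine ⟨?_, ?_⟩
  · rcases hsome with h | h | h
    · exact ⟨p, by simp, q, by simp, hpq, h⟩
    · exact ⟨p, by simp, r, by simp, hpr, h⟩
    · exact ⟨q, by simp, r, by simp, hqr, h⟩
  · by_contra! h
    exact hnall ⟨h p (by simp) q (by simp), h q (by simp) r (by simp)⟩

end

namespace LevelGadget

-- Pair `i` sits at level `i + 2`, so the levels run from `2` to `N + 2`.
abbrev Vertex (N : ℕ) : Type := Fin 3 ⊕ Fin (N + 1) ⊕ Fin (N + 1)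

variable {N : ℕ}

abbrev anchor (u : Fin 3) : Vertex N := Sum.inl u
abbrev xv (i : Fin (N + 1)) : Vertex N := Sum.inr (Sum.inl i)
abbrev yv (i : Fin (N + 1)) : Vertex N := Sum.inr (Sum.inr i)

inductive IsEdge (S : Set ℕ) : Vertex N → Vertex N → Vertex N → Prop
  | anchors_x {u v : Fin 3} (huv : u ≠ v) (i : Fin (N + 1)) :
      IsEdge S (anchor u) (anchor v) (xv i)
  | anchors_y {u v : Fin 3} (huv : u ≠ v) : IsEdge S (anchor u) (anchor v) (yv 0)
  | anchor_x_y (u : Fin 3) (i : Fin (N + 1)) : IsEdge S (anchor u) (xv i) (yv i)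
  | y_y_x {i j : Fin (N + 1)} (hij : i < j) : IsEdge S (yv i) (yv j) (xv i)
  | x_x_y (i : Fin N) : IsEdge S (xv i.castSucc) (xv i.succ) (yv i.succ)
  | x_y_x {i : Fin N} (hi : (i : ℕ) + 2 ∉ S) :
      IsEdge S (xv i.castSucc) (yv i.castSucc) (xv i.succ)

def edges (S : Set ℕ) (N : ℕ) : Set (Finset (Vertex N)) :=
  {b | ∃ p q r, IsEdge S p q r ∧ b = {p, q, r}}

theorem IsEdge.pairwise_ne {S : Set ℕ} {p q r : Vertex N} (h : IsEdge S p q r) :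
    p ≠ q ∧ p ≠ r ∧ q ≠ r := by
  cases h <;> simp [Fin.ext_iff] <;> omega

theorem card_of_mem_edges {S : Set ℕ} : ∀ b ∈ edges S N, b.card = 3 := by
  rintro b ⟨p, q, r, h, rfl⟩
  obtain ⟨hpq, hpr, hqr⟩ := h.pairwise_ne
  exact Finset.card_eq_three.2 ⟨p, q, r, hpq, hpr, hqr, rfl⟩

-- The coloring with `m = θ + 2` classes, sending each vertex to a representative of its class.
def classRep (θ : Fin (N + 1)) : Vertex N → Vertex N
  | Sum.inl _ => anchor 0
  | Sum.inr (Sum.inl i) => if i ≤ θ then xv i else xv θ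
  | Sum.inr (Sum.inr i) => if i ≤ θ then xv i else anchor 0

theorem classRep_eq_anchor_or_x {θ : Fin (N + 1)} (v : Vertex N) :
    classRep θ v = anchor 0 ∨ ∃ j ≤ θ, classRep θ v = xv j := by
  rcases v with u | i | i
  · exact .inl rfl
  all_goals by_cases hi : i ≤ θ <;> simp [classRep, hi]

theorem properSetoid_ker_classRep {S : Set ℕ} {θ : Fin (N + 1)} (hθ : (θ : ℕ) + 2 ∈ S) :
    ProperSetoid (edges S N) (Setoid.ker (classRep θ)) := by
  refine properSetoid_of_splits fun b ⟨p, q, r, h, hb⟩ => ⟨p, q, r, h.pairwise_ne.1,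
    h.pairwise_ne.2.1, h.pairwise_ne.2.2, ?_, hb⟩
  have hθ' : ∀ i : Fin N, (i : ℕ) + 2 ∉ S → (i : ℕ) ≠ θ := fun i hi h => hi (h ▸ hθ)
  cases h <;> simp only [Setoid.Splits, Setoid.ker_def, classRep] <;> split_ifs <;>
    simp_all [Fin.ext_iff] <;>
    simp only [Fin.le_def, Fin.lt_def, Fin.val_succ, Fin.val_castSucc] at * <;> omega

section Completeness

variable {S : Set ℕ} {P : Setoid (Vertex N)}
  (hP : ∀ {p q r : Vertex N}, IsEdge S p q r → P.Splits p q r)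
include hP

theorem rel_anchor_of_rel_x_zero_of_rel_y_zero {u v w : Fin 3} (huw : u ≠ w) (hvw : v ≠ w)
    (hx : P (anchor u) (xv 0)) (hy : P (anchor v) (yv 0)) : P (anchor u) (anchor v) := by
  rcases (hP (.anchor_x_y w 0)).1 with hwx | hwy | hxy
  · exact absurd ⟨P.trans hx (P.symm hwx), hwx⟩ (hP (.anchors_x huw 0)).2
  · exact absurd ⟨P.trans hy (P.symm hwy), hwy⟩ (hP (.anchors_y hvw)).2
  · exact P.trans hx (P.trans hxy (P.symm hy))

theorem rel_anchor (u v : Fin 3) : P (anchor u) (anchor v) := by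
  rcases eq_or_ne u v with rfl | huv
  · exact P.refl _
  obtain ⟨w, huw, hvw⟩ : ∃ w, u ≠ w ∧ v ≠ w := by revert u v; decide
  by_contra h
  have hx := (hP (.anchors_x huv 0)).1.resolve_left h
  have hy := (hP (.anchors_y huv)).1.resolve_left h
  rcases hx with hux | hvx <;> rcases hy with huy | hvy
  · exact (hP (.anchor_x_y u 0)).2 ⟨hux, P.trans (P.symm hux) huy⟩
  · exact h (rel_anchor_of_rel_x_zero_of_rel_y_zero hP huw hvw hux hvy)
  · exact h (P.symm (rel_anchor_of_rel_x_zero_of_rel_y_zero hP hvw huw hvx huy))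
  · exact (hP (.anchor_x_y v 0)).2 ⟨hvx, P.trans (P.symm hvx) hvy⟩

theorem not_rel_anchor_x (u : Fin 3) (i : Fin (N + 1)) : ¬ P (anchor u) (xv i) := by
  obtain ⟨v, hvu⟩ : ∃ v, v ≠ u := by revert u; decide
  exact fun h => (hP (.anchors_x hvu i)).2 ⟨rel_anchor hP v u, h⟩

theorem not_rel_anchor_y_zero : ¬ P (anchor 0) (yv 0) :=
  fun h => (hP (.anchors_y (u := 1) (by decide))).2 ⟨rel_anchor hP 1 0, h⟩

theorem rel_x_y_or_rel_anchor_y (i : Fin (N + 1)) :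
    P (xv i) (yv i) ∨ P (anchor 0) (yv i) := by
  rcases (hP (.anchor_x_y 0 i)).1 with h | h | h
  · exact absurd h (not_rel_anchor_x hP 0 i)
  · exact .inr h
  · exact .inl h

theorem rel_x_y_zero : P (xv 0) (yv 0) :=
  (rel_x_y_or_rel_anchor_y hP 0).resolve_right (not_rel_anchor_y_zero hP)

theorem not_rel_x_x {i j : Fin (N + 1)} (hij : i < j) (hi : P (xv i) (yv i))
    (hj : P (xv j) (yv j)) : ¬ P (xv i) (xv j) := fun h =>
  (hP (.y_y_x hij)).2 ⟨P.trans (P.symm hi) (P.trans h hj), P.trans (P.symm hj) (P.symm h)⟩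

theorem rel_x_y_castSucc {i : Fin N} (h : P (xv i.succ) (yv i.succ)) :
    P (xv i.castSucc) (yv i.castSucc) := by
  by_contra hi
  have hy := (rel_x_y_or_rel_anchor_y hP _).resolve_left hi
  rcases (hP (.y_y_x (Fin.castSucc_lt_succ (i := i)))).1 with hyy | hyx | hyx
  · exact not_rel_anchor_x hP 0 _ (P.trans hy (P.trans hyy (P.symm h)))
  · exact hi (P.symm hyx)
  · exact (hP (.x_x_y i)).2 ⟨P.trans (P.symm hyx) (P.symm h), h⟩

theorem rel_x_x_succ {i : Fin N} (h : ¬ P (xv i.succ) (yv i.succ)) :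
    P (xv i.castSucc) (xv i.succ) := by
  have hy := (rel_x_y_or_rel_anchor_y hP _).resolve_left h
  rcases (hP (.x_x_y i)).1 with hxx | hxy | hxy
  · exact hxx
  · exact absurd (P.trans hy (P.symm hxy)) (not_rel_anchor_x hP 0 _)
  · exact absurd hxy h

theorem rel_x_y_succ {i : Fin N} (hS : (i : ℕ) + 2 ∉ S)
    (h : P (xv i.castSucc) (yv i.castSucc)) : P (xv i.succ) (yv i.succ) := by
  by_contra hi
  exact (hP (.x_y_x hS)).2 ⟨h, P.trans (P.symm h) (rel_x_x_succ hP hi)⟩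

theorem rel_x_y_of_le {i j : Fin (N + 1)} (hij : i ≤ j) (hj : P (xv j) (yv j)) :
    P (xv i) (yv i) := by
  induction j using Fin.induction with
  | zero => rwa [Fin.le_zero_iff.1 hij]
  | succ k ih =>
    rcases hij.eq_or_lt with rfl | hlt
    · exact hj
    · exact ih (Fin.le_castSucc_iff.2 hlt) (rel_x_y_castSucc hP hj)

theorem rel_x_of_le {θ j : Fin (N + 1)} (hθ : ∀ i, θ < i → ¬ P (xv i) (yv i)) (hj : θ ≤ j) :
    P (xv θ) (xv j) := by
  induction j using Fin.induction with
  | zero => rw [Fin.le_zero_iff.1 hj]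
  | succ k ih =>
    rcases hj.eq_or_lt with rfl | hlt
    · exact P.refl _
    · exact P.trans (ih (Fin.le_castSucc_iff.2 hlt)) (rel_x_x_succ hP (hθ _ hlt))

theorem exists_greatest_rel_x_y :
    ∃ θ, P (xv θ) (yv θ) ∧ ∀ i, θ < i → ¬ P (xv i) (yv i) := by
  classical
  let A := Finset.univ.filter fun i => P (xv i) (yv i)
  have hA : A.Nonempty := ⟨0, by simpa [A] using rel_x_y_zero hP⟩
  refine ⟨A.max' hA, (Finset.mem_filter.1 (A.max'_mem hA)).2, fun i hi h => ?_⟩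
  exact not_le.2 hi (A.le_max' i (by simpa [A] using h))

variable {θ : Fin (N + 1)} (hθ : P (xv θ) (yv θ)) (hgt : ∀ i, θ < i → ¬ P (xv i) (yv i))
include hθ hgt

theorem level_mem (hN : N + 2 ∈ S) : (θ : ℕ) + 2 ∈ S := by
  rcases eq_or_ne θ (Fin.last N) with rfl | hlast
  · exact hN
  obtain ⟨i, rfl⟩ := Fin.eq_castSucc_of_ne_last hlast
  by_contra hS
  exact hgt i.succ Fin.castSucc_lt_succ (rel_x_y_succ hP hS hθ)

theorem rel_classRep (v : Vertex N) : P v (classRep θ v) := by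
  rcases v with u | i | i <;> simp only [classRep]
  · exact rel_anchor hP u 0
  · split_ifs with hi
    · exact P.refl _
    · exact P.symm (rel_x_of_le hP hgt (le_of_not_ge hi))
  · split_ifs with hi
    · exact P.symm (rel_x_y_of_le hP hi hθ)
    · exact P.symm ((rel_x_y_or_rel_anchor_y hP i).resolve_left (hgt i (lt_of_not_ge hi)))

omit hgt in
theorem classRep_eq_of_rel_classRep (a b : Vertex N) (h : P (classRep θ a) (classRep θ b)) :
    classRep θ a = classRep θ b := by
  rcases classRep_eq_anchor_or_x a with ha | ⟨i, hi, ha⟩ <;>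
    rcases classRep_eq_anchor_or_x b with hb | ⟨j, hj, hb⟩ <;> rw [ha, hb] at h ⊢
  · exact absurd h (not_rel_anchor_x hP 0 j)
  · exact absurd (P.symm h) (not_rel_anchor_x hP 0 i)
  · rcases lt_trichotomy i j with hij | rfl | hji
    · exact absurd h (not_rel_x_x hP hij (rel_x_y_of_le hP hi hθ) (rel_x_y_of_le hP hj hθ))
    · rfl
    · exact absurd (P.symm h)
        (not_rel_x_x hP hji (rel_x_y_of_le hP hj hθ) (rel_x_y_of_le hP hi hθ))

end Completeness

theorem exists_eq_ker_classRep {S : Set ℕ} (hN : N + 2 ∈ S) {P : Setoid (Vertex N)}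
    (hP : ProperSetoid (edges S N) P) :
    ∃ θ : Fin (N + 1), (θ : ℕ) + 2 ∈ S ∧ P = Setoid.ker (classRep θ) := by
  have hsplit : ∀ {p q r}, IsEdge S p q r → P.Splits p q r :=
    fun h => hP.splits ⟨_, _, _, h, rfl⟩
  obtain ⟨θ, hθ, hgt⟩ := exists_greatest_rel_x_y hsplit
  exact ⟨θ, level_mem hsplit hθ hgt hN, P.eq_ker_of_rel_rep_s12 _ (rel_classRep hsplit hθ hgt)
    (classRep_eq_of_rel_classRep hsplit hθ)⟩

theorem range_classRep (θ : Fin (N + 1)) :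
    Set.range (classRep θ) = insert (anchor 0) (xv '' Set.Iic θ) := by
  ext v
  constructor
  · rintro ⟨w, rfl⟩
    rcases classRep_eq_anchor_or_x w with h | ⟨j, hj, h⟩ <;> rw [h]
    · exact Set.mem_insert _ _
    · exact Set.mem_insert_of_mem _ ⟨j, hj, rfl⟩
  · rintro (rfl | ⟨j, hj, rfl⟩)
    · exact ⟨anchor 0, rfl⟩
    · exact ⟨xv j, by simp [classRep, Set.mem_Iic.1 hj]⟩

theorem card_quotient_ker_classRep (θ : Fin (N + 1)) :
    Nat.card (Quotient (Setoid.ker (classRep θ))) = θ + 2 := by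
  have hx : Function.Injective (xv : Fin (N + 1) → Vertex N) := fun i j h => by simpa using h
  rw [Nat.card_congr (Setoid.quotientKerEquivRange _), range_classRep, Nat.card_coe_set_eq,
    Set.ncard_insert_of_notMem (by simp), Set.ncard_image_of_injective _ hx,
    ← Finset.coe_Iic, Set.ncard_coe_finset, Fin.card_Iic]

theorem feasibleSet_edges {S : Set ℕ} (hS : ∀ m ∈ S, 2 ≤ m ∧ m ≤ N + 2) (hN : N + 2 ∈ S) :
    feasibleSet (edges S N) = S := by
  ext k
  constructor
  · rintro ⟨P, hP, rfl⟩
    obtain ⟨θ, hθ, rfl⟩ := exists_eq_ker_classRep hN hP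
    rwa [card_quotient_ker_classRep]
  · intro hk
    obtain ⟨h2, hle⟩ := hS k hk
    have hθ : ((⟨k - 2, by omega⟩ : Fin (N + 1)) : ℕ) + 2 = k := Nat.sub_add_cancel h2
    exact ⟨_, properSetoid_ker_classRep (hθ ▸ hk), by rw [card_quotient_ker_classRep, hθ]⟩

end LevelGadget

/-- for every finite set `S = {n₁ > n₂ > ⋯ > nₛ}` of integers
with `|S| = s ≥ 2` and `min S > 3` (here enumerated by a strictly decreasing
`n : Fin s → ℕ`, so `n 0 = max S` and `n 1` is the second largest element),
there is a 3-uniform bi-hypergraph on at most `2·n₁ + n₂ + s - 2` vertices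
whose feasible set is exactly `S`. -/
theorem stmt12 (s : ℕ) (hs : 2 ≤ s) (n : Fin s → ℕ)
    (hstrict : StrictAnti n) (h3 : ∀ i, 3 < n i) :
    ∃ (X : Type) (_ : Fintype X) (E : Set (Finset X)),
      (∀ b ∈ E, b.card = 3) ∧
      Nat.card X ≤ 2 * n ⟨0, by omega⟩ + n ⟨1, by omega⟩ + s - 2 ∧
      {k | ∃ P : Setoid X, ProperSetoid E P ∧ Nat.card (Quotient P) = k}
        = Set.range n := by
  obtain ⟨N, hN⟩ := Nat.exists_eq_add_of_le' ((h3 ⟨0, by omega⟩).le.trans' (by norm_num : 2 ≤ 3))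
  have hmax : ∀ i, n i ≤ N + 2 := fun i => hN ▸ hstrict.antitone (Nat.zero_le i.val)
  refine ⟨LevelGadget.Vertex N, inferInstance, LevelGadget.edges (Set.range n) N,
    LevelGadget.card_of_mem_edges, ?_, LevelGadget.feasibleSet_edges ?_ ⟨⟨0, by omega⟩, hN⟩⟩
  · simp only [Nat.card_eq_fintype_card, Fintype.card_sum, Fintype.card_fin, hN]
    have := h3 ⟨1, by omega⟩
    omega
  · rintro _ ⟨i, rfl⟩
    exact ⟨by linarith [h3 i], hmax i⟩
end

section
/- Let $s \geq 2$ and $n_1 \geq n_2 > n_3 > \cdots > n_s > 3$, with $X^*_{n_1,\ldots,n_s} = \bigcup_{i=1}^s X_i$ defined as in the paper, and let $X^\dagger = X^*_{n_1,\ldots,n_s} \setminus (X_1 \cup X_2)$. Then the derived sub-hypergraph $\mathcal{H}_{n_1,\ldots,n_s}[X^\dagger]$ is isomorphic to $\mathcal{H}^*_{n_3,n_3,n_4,\ldots,n_s}$. -/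
/-- 1-based value of coordinate `k` of a vertex (for `1 ≤ k ≤ s`). -/
def vOf {s : ℕ} {n : Fin s → ℕ} (x : ∀ j, Fin (n j)) (k : ℕ) : ℕ :=
  if h : k - 1 < s then (x ⟨k - 1, h⟩).val + 1 else 1

/-- 1-based access to the sizes: `nOf s n k = n_k`. -/
def nOf (s : ℕ) (n : Fin s → ℕ) (k : ℕ) : ℕ :=
  if h : k - 1 < s then n ⟨k - 1, h⟩ else 0

/-- The component `X₁ = {(n₂+j,1,…,1), (n₂+j,n₂,n₃,…,nₛ) : j ∈ [n₁-n₂]}`. -/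
def X1Set (s : ℕ) (n : Fin s → ℕ) : Set (∀ j, Fin (n j)) :=
  {x | nOf s n 2 < vOf x 1 ∧
    ((∀ k, 2 ≤ k → k ≤ s → vOf x k = 1) ∨
     (∀ k, 2 ≤ k → k ≤ s → vOf x k = nOf s n k))}

/-- The component `Xᵢ` for `2 ≤ i ≤ s-1`:
`{(n_{i+1}+j,1,…,1), (n_{i+1}+j,…,n_{i+1}+j,n_{i+1},…,nₛ) : j ∈ [nᵢ-n_{i+1}]}`
(the repeated value in coordinates 1..i) together with the inflexion-type
vertices `{(1,n_{i+1}+j,…,n_{i+1}+j,1,…,1) : 0 ≤ j ≤ nᵢ-n_{i+1}}` (the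
repeated value in coordinates 2..i). -/
def XiSet (s : ℕ) (n : Fin s → ℕ) (i : ℕ) : Set (∀ j, Fin (n j)) :=
  {x | (nOf s n (i+1) < vOf x 1 ∧ vOf x 1 ≤ nOf s n i ∧
        ((∀ k, 2 ≤ k → k ≤ s → vOf x k = 1) ∨
         ((∀ k, 2 ≤ k → k ≤ i → vOf x k = vOf x 1) ∧
          (∀ k, i + 1 ≤ k → k ≤ s → vOf x k = nOf s n k)))) ∨
       (vOf x 1 = 1 ∧ nOf s n (i+1) ≤ vOf x 2 ∧ vOf x 2 ≤ nOf s n i ∧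
        (∀ k, 2 ≤ k → k ≤ i → vOf x k = vOf x 2) ∧
        (∀ k, i + 1 ≤ k → k ≤ s → vOf x k = 1))}

/-- The component `Xₛ = {(i,k,…,k) : i,k ∈ [3]}
∪ {(1,k,…,k), (k,1,…,1), (k,…,k) : 4 ≤ k ≤ nₛ}`. -/
def XsSet (s : ℕ) (n : Fin s → ℕ) : Set (∀ j, Fin (n j)) :=
  {x | (vOf x 1 ≤ 3 ∧ vOf x 2 ≤ 3 ∧ (∀ k, 2 ≤ k → k ≤ s → vOf x k = vOf x 2)) ∨
       (vOf x 1 = 1 ∧ 4 ≤ vOf x 2 ∧ vOf x 2 ≤ nOf s n s ∧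
        (∀ k, 2 ≤ k → k ≤ s → vOf x k = vOf x 2)) ∨
       (4 ≤ vOf x 1 ∧ vOf x 1 ≤ nOf s n s ∧
        (∀ k, 2 ≤ k → k ≤ s → vOf x k = 1)) ∨
       (4 ≤ vOf x 1 ∧ vOf x 1 ≤ nOf s n s ∧
        (∀ k, 2 ≤ k → k ≤ s → vOf x k = vOf x 1))}

/-- The vertex set `X*_{n₁,…,nₛ} = X₁ ∪ (⋃_{i=2}^{s-1} Xᵢ) ∪ Xₛ`. -/
def XstarSet (s : ℕ) (n : Fin s → ℕ) : Set (∀ j, Fin (n j)) :=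
  X1Set s n ∪ (⋃ i ∈ Set.Icc 2 (s - 1), XiSet s n i) ∪ XsSet s n

/-!
Every vertex of `X†` has equal second and third coordinates and first coordinate at most `n₃`:
`X₁` and `X₂` are exactly the vertices of `X*` violating this. Merging coordinates `2` and `3`
is therefore injective on `X†`, lands in `[n₃] × [n₃] × [n₄] × ⋯ × [n_{s+1}]`, and carries
`X_{i+1}` onto the `i`-th component and `X_{s+1}` onto the last component of
`X*_{n₃,n₃,n₄,…,n_{s+1}}`. As the two merged coordinates agree on every vertex, a triple takes
exactly two values in each coordinate before merging iff it does after.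
-/

section Coordinates

variable {s : ℕ} {n : Fin s → ℕ}

theorem vOf_succ (x : ∀ j, Fin (n j)) (j : Fin s) : vOf x (j + 1) = (x j).val + 1 := by
  simp [vOf]

theorem vOf_zero (x : ∀ j, Fin (n j)) : vOf x 0 = vOf x 1 := rfl

theorem vOf_of_lt (x : ∀ j, Fin (n j)) {k : ℕ} (hk : s < k) : vOf x k = 1 :=
  dif_neg (by omega)

theorem nOf_succ (j : Fin s) : nOf s n (j + 1) = n j := by
  simp [nOf]

theorem nOf_of_le {k : ℕ} (h1 : 1 ≤ k) (hk : k ≤ s) : nOf s n k = n ⟨k - 1, by omega⟩ :=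
  dif_pos (by omega)

theorem nOf_of_lt {k : ℕ} (hk : s < k) : nOf s n k = 0 :=
  dif_neg (by omega)

theorem exists_fin_succ_eq {k : ℕ} (h1 : 1 ≤ k) (hk : k ≤ s) : ∃ j : Fin s, (j : ℕ) + 1 = k :=
  ⟨⟨k - 1, by omega⟩, by simp only; omega⟩

theorem one_le_vOf (x : ∀ j, Fin (n j)) (k : ℕ) : 1 ≤ vOf x k := by
  unfold vOf
  split_ifs <;> omega

theorem vOf_le_nOf (x : ∀ j, Fin (n j)) {k : ℕ} (h1 : 1 ≤ k) (hk : k ≤ s) :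
    vOf x k ≤ nOf s n k := by
  obtain ⟨j, rfl⟩ := exists_fin_succ_eq h1 hk
  rw [vOf_succ, nOf_succ]
  exact (x j).isLt

theorem ext_vOf {x x' : ∀ j, Fin (n j)} (h : ∀ k, vOf x k = vOf x' k) : x = x' := by
  funext j
  have := h (j + 1)
  rw [vOf_succ, vOf_succ] at this
  exact Fin.ext (by omega)

theorem exists_vOf_eq (v : ℕ → ℕ)
    (hv : ∀ k, 1 ≤ k → k ≤ s → 1 ≤ v k ∧ v k ≤ nOf s n k) :
    ∃ x : ∀ j, Fin (n j), ∀ k, 1 ≤ k → k ≤ s → vOf x k = v k := by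
  refine ⟨fun j => ⟨v (j + 1) - 1, ?_⟩, fun k h1 hk => ?_⟩
  · have := hv (j + 1) (by omega) (by omega)
    rw [nOf_succ] at this
    omega
  · obtain ⟨j, rfl⟩ := exists_fin_succ_eq h1 hk
    have := hv (j + 1) h1 hk
    rw [vOf_succ]
    dsimp only
    omega

theorem card_image_vOf_succ {ι : Type*} [DecidableEq ι] (t : Finset ι)
    (f : ι → ∀ j, Fin (n j)) (j : Fin s) :
    (t.image fun i => vOf (f i) (j + 1)).card = (t.image fun i => f i j).card := by
  have : (fun i => vOf (f i) (j + 1)) = (fun a : Fin (n j) => a.val + 1) ∘ fun i => f i j := by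
    funext i; simp [vOf_succ]
  have hinj : Function.Injective fun a : Fin (n j) => a.val + 1 :=
    fun a b hab => Fin.ext (by simpa using hab)
  rw [this, ← Finset.image_image, Finset.card_image_of_injective _ hinj]

theorem map_mem_Es_iff {ι : Type*} [DecidableEq ι] (t : Finset ι) (f : ι ↪ ∀ j, Fin (n j)) :
    t.map f ∈ Es n ↔
      t.card = 3 ∧ ∀ k, 1 ≤ k → k ≤ s → (t.image fun i => vOf (f i) k).card = 2 := by
  simp only [Es, Set.mem_ofPred_eq]
  rw [Finset.card_map]
  simp only [Finset.map_eq_image, Finset.image_image]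
  refine and_congr Iff.rfl ⟨fun h k h1 hk => ?_, fun h j => ?_⟩
  · obtain ⟨j, rfl⟩ := exists_fin_succ_eq h1 hk
    rw [card_image_vOf_succ]
    exact h j
  · rw [Function.comp_def, ← card_image_vOf_succ]
    exact h _ (by omega) (by omega)

end Coordinates

section Components

variable {t : ℕ} {n : Fin t → ℕ} {x : ∀ j, Fin (n j)}

theorem vOf_two_eq_three_of_mem_XiSet {i : ℕ} (ht : 3 ≤ t) (hi : 3 ≤ i)
    (hx : x ∈ XiSet t n i) : vOf x 2 = vOf x 3 := by
  rcases hx with ⟨-, -, hone | ⟨hrep, -⟩⟩ | ⟨-, -, -, hrep, -⟩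
  · rw [hone 2 le_rfl (by omega), hone 3 (by omega) ht]
  · rw [hrep 2 le_rfl (by omega), hrep 3 (by omega) hi]
  · rw [hrep 2 le_rfl (by omega), hrep 3 (by omega) hi]

theorem vOf_one_le_of_mem_XiSet {i : ℕ} (hx : x ∈ XiSet t n i) :
    vOf x 1 = 1 ∨ vOf x 1 ≤ nOf t n i := by
  rcases hx with ⟨-, hle, -⟩ | ⟨hone, -⟩
  · exact Or.inr hle
  · exact Or.inl hone

theorem vOf_two_eq_three_of_mem_XsSet (ht : 3 ≤ t) (hx : x ∈ XsSet t n) :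
    vOf x 2 = vOf x 3 := by
  obtain ⟨-, -, hrep⟩ | ⟨-, -, -, hrep⟩ | ⟨-, -, hrep⟩ | ⟨-, -, hrep⟩ := hx <;>
    rw [hrep 2 le_rfl (by omega), hrep 3 (by omega) ht]

theorem vOf_one_le_of_mem_XsSet (hx : x ∈ XsSet t n) :
    vOf x 1 ≤ 3 ∨ vOf x 1 ≤ nOf t n t := by
  obtain ⟨h, -⟩ | ⟨h, -⟩ | ⟨-, h, -⟩ | ⟨-, h, -⟩ := hx <;> omega

theorem mem_XstarSet_iff :
    x ∈ XstarSet t n ↔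
      x ∈ X1Set t n ∨ (∃ i, 2 ≤ i ∧ i ≤ t - 1 ∧ x ∈ XiSet t n i) ∨ x ∈ XsSet t n := by
  simp only [XstarSet, Set.mem_union, Set.mem_iUnion, Set.mem_Icc, exists_prop, and_assoc,
    or_assoc]

theorem X1Set_eq_empty (ht : 1 ≤ t) (hn : nOf t n 1 ≤ nOf t n 2) : X1Set t n = ∅ :=
  Set.eq_empty_of_forall_notMem fun z ⟨hlt, _⟩ => by
    linarith [vOf_le_nOf z le_rfl ht]

end Components

theorem Relator.exists_equiv_of_biUnique {α β : Sort*} {R : α → β → Prop}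
    (hu : Relator.BiUnique R) (ht : Relator.BiTotal R) : ∃ e : α ≃ β, ∀ a, R a (e a) := by
  choose f hf using ht.1
  refine ⟨Equiv.ofBijective f ⟨fun a a' hff => hu.1 (hf a) (hff ▸ hf a'), fun b => ?_⟩, hf⟩
  obtain ⟨a, ha⟩ := ht.2 b
  exact ⟨a, hu.2 (hf a) ha⟩

/-- Coordinates `2` and `3` of `H_{n₁,…,n_{s+1}}` both become coordinate `2` of
`H_{n₃,n₃,n₄,…,n_{s+1}}`; coordinate `k ≥ 3` becomes `k - 1`. -/
def collapseIdx (k : ℕ) : ℕ := if k ≤ 2 then k else k - 1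

@[simp] theorem collapseIdx_of_le {k : ℕ} (hk : k ≤ 2) : collapseIdx k = k := if_pos hk

theorem collapseIdx_of_lt {k : ℕ} (hk : 2 < k) : collapseIdx k = k - 1 := if_neg (by omega)

theorem collapseIdx_succ {k : ℕ} (hk : 2 ≤ k) : collapseIdx (k + 1) = k := by
  rw [collapseIdx_of_lt (by omega), Nat.add_sub_cancel]

theorem collapseIdx_mem_Icc {k b : ℕ} (hk : 1 ≤ k) (hkb : k ≤ b + 1) (hb : 2 ≤ b) :
    1 ≤ collapseIdx k ∧ collapseIdx k ≤ b := by
  unfold collapseIdx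
  split_ifs <;> omega

theorem forall_collapseIdx_iff {P : ℕ → Prop} {a b : ℕ} (hb : 2 ≤ b) :
    (∀ k, a ≤ k → k ≤ b + 1 → P (collapseIdx k)) ↔ ∀ k, collapseIdx a ≤ k → k ≤ b → P k := by
  unfold collapseIdx
  constructor
  · intro h k hak hkb
    rcases Nat.lt_or_ge k 2 with hk | hk
    · simpa [hk.le] using h k (by split_ifs at hak <;> omega) (by omega)
    · simpa [show ¬ k + 1 ≤ 2 by omega] using h (k + 1) (by split_ifs at hak <;> omega) (by omega)
  · intro h k hak hkb
    exact h _ (by split_ifs <;> omega) (by split_ifs <;> omega)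

/-- The size data of the theorem, read through `nOf`: `m = (n₃,n₃,n₄,…,n_{s+1})` where
`n₃ ≤ n₁, n₂`, `n₃ > 3` and `n₃` bounds `n₄, …, n_{s+1}`. -/
structure CollapsedSizes {s : ℕ} (n : Fin (s + 1) → ℕ) (m : Fin s → ℕ) : Prop where
  two_le : 2 ≤ s
  first_le : nOf s m 1 ≤ nOf (s + 1) n 1
  first_le_second : nOf s m 1 ≤ nOf (s + 1) n 2
  second_eq_first : nOf s m 2 = nOf s m 1
  succ_eq : ∀ k, 2 ≤ k → nOf s m k = nOf (s + 1) n (k + 1)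
  le_first : ∀ k, 3 ≤ k → nOf (s + 1) n k ≤ nOf s m 1
  three_lt : 3 < nOf s m 1

def XdaggerSet (s : ℕ) (n : Fin (s + 1) → ℕ) : Set (∀ j, Fin (n j)) :=
  XstarSet (s + 1) n \ (X1Set (s + 1) n ∪ XiSet (s + 1) n 2)

section Collapse

variable {s : ℕ} {n : Fin (s + 1) → ℕ} {m : Fin s → ℕ}

def Collapses (x : ∀ j, Fin (n j)) (y : ∀ k, Fin (m k)) : Prop :=
  ∀ k, vOf x k = vOf y (collapseIdx k)

theorem collapses_of_forall {x : ∀ j, Fin (n j)} {y : ∀ k, Fin (m k)}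
    (h : ∀ k, 1 ≤ k → k ≤ s + 1 → vOf x k = vOf y (collapseIdx k)) : Collapses x y := by
  intro k
  rcases Nat.eq_zero_or_pos k with rfl | hk
  · simpa [vOf_zero] using h 1 le_rfl (by omega)
  rcases Nat.lt_or_ge (s + 1) k with hsk | hsk
  · rw [vOf_of_lt x hsk, vOf_of_lt y (by unfold collapseIdx; split_ifs <;> omega)]
  · exact h k hk hsk

namespace Collapses

variable {x x' : ∀ j, Fin (n j)} {y y' : ∀ k, Fin (m k)}

theorem vOf_right (h : Collapses x y) (k : ℕ) :
    vOf y k = vOf x (if k ≤ 1 then k else k + 1) := by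
  split_ifs with hk
  · rw [h, collapseIdx_of_le (by omega)]
  · rw [h, collapseIdx_of_lt (by omega), Nat.add_sub_cancel]

theorem vOf_two_eq_three (h : Collapses x y) : vOf x 2 = vOf x 3 := by
  rw [h, h]; rfl

theorem left_unique (h : Collapses x y) (h' : Collapses x' y) : x = x' :=
  ext_vOf fun k => by rw [h, h']

theorem right_unique (h : Collapses x y) (h' : Collapses x y') : y = y' :=
  ext_vOf fun k => by rw [h.vOf_right, h'.vOf_right]

theorem forall_iff (h : Collapses x y) (P : ℕ → Prop) {a b : ℕ} (hb : 2 ≤ b) :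
    (∀ k, a ≤ k → k ≤ b + 1 → P (vOf x k)) ↔ ∀ k, collapseIdx a ≤ k → k ≤ b → P (vOf y k) := by
  simp only [show ∀ k, vOf x k = vOf y (collapseIdx k) from h]
  exact forall_collapseIdx_iff (P := fun k => P (vOf y k)) hb

theorem forall_vOf_eq_nOf_iff (h : Collapses x y) (hnm : CollapsedSizes n m) {a : ℕ}
    (ha : 2 ≤ a) :
    (∀ k, a + 1 ≤ k → k ≤ s + 1 → vOf x k = nOf (s + 1) n k) ↔
      ∀ k, a ≤ k → k ≤ s → vOf y k = nOf s m k := by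
  calc (∀ k, a + 1 ≤ k → k ≤ s + 1 → vOf x k = nOf (s + 1) n k)
      ↔ ∀ k, a + 1 ≤ k → k ≤ s + 1 → vOf y (collapseIdx k) = nOf s m (collapseIdx k) :=
        forall₃_congr fun k hak _ => by
          rw [h, collapseIdx_of_lt (by omega), hnm.succ_eq _ (by omega),
            Nat.sub_add_cancel (by omega)]
    _ ↔ ∀ k, a ≤ k → k ≤ s → vOf y k = nOf s m k := by
      rw [forall_collapseIdx_iff (P := fun k => vOf y k = nOf s m k) hnm.two_le,
        collapseIdx_succ ha]

theorem mem_XiSet_iff (h : Collapses x y) (hnm : CollapsedSizes n m) {i : ℕ} (hi : 2 ≤ i) :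
    x ∈ XiSet (s + 1) n (i + 1) ↔ y ∈ XiSet s m i := by
  simp only [XiSet, Set.mem_ofPred_eq]
  rw [h.forall_iff (· = 1) hnm.two_le, h.forall_iff (· = vOf x 1) hi,
    h.forall_iff (· = vOf x 2) hi, h.forall_iff (· = 1) hnm.two_le,
    h.forall_vOf_eq_nOf_iff hnm (by omega), ← hnm.succ_eq _ (by omega),
    ← hnm.succ_eq _ hi, h 1, h 2, collapseIdx_succ (k := i + 1) (by omega)]
  simp

theorem mem_XsSet_iff (h : Collapses x y) (hnm : CollapsedSizes n m) :
    x ∈ XsSet (s + 1) n ↔ y ∈ XsSet s m := by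
  simp only [XsSet, Set.mem_ofPred_eq]
  rw [h.forall_iff (· = vOf x 2) hnm.two_le, h.forall_iff (· = 1) hnm.two_le,
    h.forall_iff (· = vOf x 1) hnm.two_le, hnm.succ_eq _ hnm.two_le, h 1, h 2]
  simp

theorem notMem_X1Set (h : Collapses x y) (hnm : CollapsedSizes n m) :
    x ∉ X1Set (s + 1) n := by
  rintro ⟨hlt, -⟩
  have := vOf_le_nOf y le_rfl (by linarith [hnm.two_le])
  rw [h 1, collapseIdx_of_le (by omega)] at hlt
  linarith [hnm.first_le_second]

theorem notMem_XiSet_two (h : Collapses x y) (hnm : CollapsedSizes n m) :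
    x ∉ XiSet (s + 1) n 2 := by
  have hs := hnm.two_le
  have h3 : nOf (s + 1) n (2 + 1) = nOf s m 1 :=
    (hnm.succ_eq 2 le_rfl).symm.trans hnm.second_eq_first
  rintro (⟨hlt, -⟩ | ⟨-, hle, -, -, hone⟩)
  · have := vOf_le_nOf y le_rfl (by omega)
    rw [h 1, collapseIdx_of_le (by omega)] at hlt
    omega
  · have := hone 3 le_rfl (by omega)
    rw [h.vOf_two_eq_three] at hle
    linarith [hnm.three_lt]

theorem mem_XdaggerSet_iff (h : Collapses x y) (hnm : CollapsedSizes n m) :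
    x ∈ XdaggerSet s n ↔ y ∈ XstarSet s m := by
  have hs := hnm.two_le
  simp only [XdaggerSet, Set.mem_sdiff, Set.mem_union, mem_XstarSet_iff, h.notMem_X1Set hnm,
    h.notMem_XiSet_two hnm, X1Set_eq_empty (by omega) hnm.second_eq_first.ge,
    Set.mem_empty_iff_false, h.mem_XsSet_iff hnm, false_or, or_false, not_false_eq_true,
    and_true]
  refine or_congr_left ⟨fun ⟨i, hi, his, hx⟩ => ?_, fun ⟨i, hi, his, hy⟩ => ?_⟩
  · obtain rfl | ⟨i, rfl, hi'⟩ : i = 2 ∨ ∃ i', i = i' + 1 ∧ 2 ≤ i' := by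
      rcases Nat.lt_or_ge i 3 with hi3 | hi3
      · exact Or.inl (by omega)
      · exact Or.inr ⟨i - 1, by omega, by omega⟩
    · exact absurd hx (h.notMem_XiSet_two hnm)
    · exact ⟨i, hi', by omega, (h.mem_XiSet_iff hnm hi').1 hx⟩
  · exact ⟨i + 1, by omega, by omega, (h.mem_XiSet_iff hnm hi).2 hy⟩

end Collapses

theorem exists_collapses (hnm : CollapsedSizes n m) {x : ∀ j, Fin (n j)}
    (h23 : vOf x 2 = vOf x 3) (h1 : vOf x 1 ≤ nOf s m 1) : ∃ y : ∀ k, Fin (m k), Collapses x y := by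
  obtain ⟨y, hy⟩ := exists_vOf_eq (n := m) (fun k => vOf x (if k ≤ 1 then k else k + 1))
    fun k hk hks => by
      split_ifs with hk1
      · obtain rfl : k = 1 := by omega
        exact ⟨one_le_vOf x 1, h1⟩
      · exact ⟨one_le_vOf x _, hnm.succ_eq k (by omega) ▸ vOf_le_nOf x (by omega) (by omega)⟩
  refine ⟨y, collapses_of_forall fun k hk hks => ?_⟩
  have hs := hnm.two_le
  obtain ⟨hk1, hks'⟩ := collapseIdx_mem_Icc hk hks hs
  rw [hy _ hk1 hks']
  rcases Nat.lt_or_ge k 3 with hk3 | hk3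
  · interval_cases k <;> simp [h23]
  · rw [collapseIdx_of_lt hk3, if_neg (by omega), Nat.sub_add_cancel (by omega)]

theorem exists_collapses_left (hnm : CollapsedSizes n m) (y : ∀ k, Fin (m k)) :
    ∃ x : ∀ j, Fin (n j), Collapses x y := by
  have hs := hnm.two_le
  obtain ⟨x, hx⟩ := exists_vOf_eq (n := n) (fun k => vOf y (collapseIdx k))
    fun k hk hks => by
      refine ⟨one_le_vOf y _, ?_⟩
      rcases Nat.lt_or_ge k 3 with hk3 | hk3
      · interval_cases k
        · exact (vOf_le_nOf y le_rfl (by omega)).trans hnm.first_le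
        · exact (vOf_le_nOf y (by norm_num : 1 ≤ 2) hs).trans
            (hnm.second_eq_first.trans_le hnm.first_le_second)
      · rw [collapseIdx_of_lt (by omega)]
        have := hnm.succ_eq (k - 1) (by omega)
        rw [Nat.sub_add_cancel (by omega)] at this
        exact this ▸ vOf_le_nOf y (by omega) (by omega)
  exact ⟨x, collapses_of_forall hx⟩

theorem exists_collapses_of_mem (hnm : CollapsedSizes n m) {x : ∀ j, Fin (n j)}
    (hx : x ∈ XdaggerSet s n) :
    ∃ y : ∀ k, Fin (m k), Collapses x y := by
  obtain ⟨hstar, hnot⟩ := hx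
  have hs := hnm.two_le
  rcases mem_XstarSet_iff.1 hstar with hX1 | ⟨i, hi, his, hXi⟩ | hXs
  · exact absurd (Or.inl hX1) hnot
  · obtain rfl | hi3 : i = 2 ∨ 3 ≤ i := by omega
    · exact absurd (Or.inr hXi) hnot
    refine exists_collapses hnm (vOf_two_eq_three_of_mem_XiSet (by omega) hi3 hXi) ?_
    rcases vOf_one_le_of_mem_XiSet hXi with h | h
    · linarith [hnm.three_lt]
    · exact h.trans (hnm.le_first i hi3)
  · refine exists_collapses hnm (vOf_two_eq_three_of_mem_XsSet (by omega) hXs) ?_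
    rcases vOf_one_le_of_mem_XsSet hXs with h | h
    · linarith [hnm.three_lt]
    · exact h.trans (hnm.le_first _ (by omega))

theorem exists_equiv_collapses (hnm : CollapsedSizes n m) :
    ∃ φ : XdaggerSet s n ≃ XstarSet s m, ∀ p, Collapses p.1 (φ p).1 := by
  refine Relator.exists_equiv_of_biUnique
    (R := fun (p : XdaggerSet s n) (q : XstarSet s m) => Collapses p.1 q.1)
    ⟨fun _ _ _ h h' => Subtype.ext (h.left_unique h'),
      fun _ _ _ h h' => Subtype.ext (h.right_unique h')⟩
    ⟨fun p => ?_, fun q => ?_⟩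
  · obtain ⟨y, h⟩ := exists_collapses_of_mem hnm p.2
    exact ⟨⟨y, (h.mem_XdaggerSet_iff hnm).1 p.2⟩, h⟩
  · obtain ⟨x, h⟩ := exists_collapses_left hnm q.1
    exact ⟨⟨x, (h.mem_XdaggerSet_iff hnm).2 q.2⟩, h⟩

theorem map_mem_Es_iff_of_collapses (hs : 2 ≤ s) {ι : Type*} [DecidableEq ι] (t : Finset ι)
    (f : ι ↪ ∀ j, Fin (n j)) (g : ι ↪ ∀ k, Fin (m k)) (h : ∀ i, Collapses (f i) (g i)) :
    t.map f ∈ Es n ↔ t.map g ∈ Es m := by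
  rw [map_mem_Es_iff, map_mem_Es_iff]
  refine and_congr Iff.rfl ?_
  simp only [show ∀ i k, vOf (f i) k = vOf (g i) (collapseIdx k) from h]
  simpa using forall_collapseIdx_iff (P := fun k => (t.image fun i => vOf (g i) k).card = 2)
    (a := 1) hs

end Collapse

theorem collapsedSizes_of_strictAnti {s : ℕ} (hs : 1 < s) {n : Fin (s + 1) → ℕ}
    (h12 : n ⟨1, by omega⟩ ≤ n ⟨0, by omega⟩)
    (hstrict : ∀ i j : Fin (s + 1), 1 ≤ i.val → i < j → n j < n i)
    (h3 : ∀ i, 3 < n i) (m : Fin s → ℕ)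
    (hm : ∀ k, m k = if k.val ≤ 1 then n ⟨2, by omega⟩ else n ⟨k.val + 1, by omega⟩) :
    CollapsedSizes n m := by
  have anti : ∀ a b, 2 ≤ a → a ≤ b → nOf (s + 1) n b ≤ nOf (s + 1) n a := by
    intro a b ha hab
    rcases Nat.lt_or_ge (s + 1) b with hb | hb
    · simp [nOf_of_lt hb]
    rcases hab.eq_or_lt with rfl | hab
    · exact le_rfl
    rw [nOf_of_le (by omega) hb, nOf_of_le (by omega) (by omega)]
    exact (hstrict _ _ (by simp only; omega) (Fin.mk_lt_mk.2 (by omega))).le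
  have hm1 : nOf s m 1 = nOf (s + 1) n 3 := by
    rw [nOf_of_le le_rfl (by omega), nOf_of_le (k := 3) (by omega) (by omega), hm, if_pos (by simp)]
  have hsucc : ∀ k, 2 ≤ k → nOf s m k = nOf (s + 1) n (k + 1) := by
    intro k hk
    rcases Nat.lt_or_ge s k with hks | hks
    · rw [nOf_of_lt hks, nOf_of_lt (by omega)]
    rw [nOf_of_le (by omega) hks, nOf_of_le (k := k + 1) (by omega) (by omega), hm]
    split_ifs <;> congr 1 <;> ext <;> simp only at * <;> omega
  have h21 : nOf (s + 1) n 2 ≤ nOf (s + 1) n 1 := by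
    rwa [nOf_of_le (k := 2) (by omega) (by omega), nOf_of_le (k := 1) le_rfl (by omega)]
  refine ⟨hs, ?_, ?_, (hsucc 2 le_rfl).trans hm1.symm, hsucc, fun k hk => ?_, ?_⟩
  · rw [hm1]
    exact (anti 2 3 le_rfl (by omega)).trans h21
  · rw [hm1]
    exact anti 2 3 le_rfl (by omega)
  · rw [hm1]
    exact anti 3 k (by omega) hk
  · rw [hm1, nOf_of_le (by omega) (by omega)]
    exact h3 _

/-- for `s+1 ≥ 3` coordinates and `n₁ ≥ n₂ > n₃ > ⋯ > n_{s+1} > 3`,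
the derived sub-hypergraph of `H_{n₁,…,n_{s+1}}` on
`X† = X*_{n₁,…,n_{s+1}} \ (X₁ ∪ X₂)` is isomorphic to
`H*_{n₃,n₃,n₄,…,n_{s+1}}`, i.e. the derived sub-hypergraph of `H_m` on
`X*_m` where `m = (n₃,n₃,n₄,…,n_{s+1})`: there is a bijection of vertex sets
carrying edges onto edges in both directions. -/
theorem stmt19 (s : ℕ) (hs : 2 ≤ s) (n : Fin (s + 1) → ℕ)
    (h12 : n ⟨1, by omega⟩ ≤ n ⟨0, by omega⟩)
    (hstrict : ∀ i j : Fin (s + 1), 1 ≤ i.val → i < j → n j < n i)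
    (h3 : ∀ i, 3 < n i) :
    let m : Fin s → ℕ := fun k =>
      if k.val ≤ 1 then n ⟨2, by omega⟩ else n ⟨k.val + 1, Nat.succ_lt_succ k.isLt⟩
    ∃ φ : {x : ∀ j, Fin (n j) //
            x ∈ XstarSet (s + 1) n \ (X1Set (s + 1) n ∪ XiSet (s + 1) n 2)} ≃
          {y : ∀ j, Fin (m j) // y ∈ XstarSet s m},
      ∀ b : Finset {x : ∀ j, Fin (n j) //
            x ∈ XstarSet (s + 1) n \ (X1Set (s + 1) n ∪ XiSet (s + 1) n 2)},
        b.map (Function.Embedding.subtype _) ∈ Es n ↔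
        (b.map φ.toEmbedding).map (Function.Embedding.subtype _) ∈ Es m := by
  intro m
  have hnm : CollapsedSizes n m := collapsedSizes_of_strictAnti hs h12 hstrict h3 m fun _ => rfl
  obtain ⟨φ, hφ⟩ := exists_equiv_collapses hnm
  refine ⟨φ, fun b => ?_⟩
  rw [Finset.map_map]
  exact map_mem_Es_iff_of_collapses hs b _ _ hφ
end
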